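/- arXiv:2006.06811 — 5 statements merged into one kernel-verified Lean document; each statement's English description precedes it below -/
import Mathlib

section
/- Let β ∈ 𝒜. If ν* ∈ N_β is an X-circuit of 𝒜, then the set {α ∈ 𝒜 : ν*_α > 0} is affinely independent in ℝⁿ. (In particular, an X-circuit has at most n+2 nonzero entries.) -/
/-!
If the points `α` with `ν_α > 0` satisfied a nontrivial affine relation `μ`, then `μ` is
supported where `ν` is positive, `Σ μ_α = 0` and `𝒜μ = 0`. Hence `ν ± εμ` stay in `N_β` for
small `ε > 0`, the map `ν' ↦ σ_X(-𝒜ν')` is constant on the line `ν + ℝμ`, and `ν` is the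
midpoint of `ν + εμ` and `ν - εμ`. These two are not proportional, since they agree at `β`,
where `ν_β < 0`, and `μ ≠ 0`: this contradicts `ν` being an `X`-circuit.
-/

open Finset

/-- Dot product on `Fin n → ℝ`. -/
noncomputable def dotp {n : ℕ} (y x : Fin n → ℝ) : ℝ := ∑ i, y i * x i

/-- Support function `σ_X : ℝⁿ → ℝ ∪ {±∞}` of a set `X ⊆ ℝⁿ`. -/
noncomputable def suppFn {n : ℕ} (X : Set (Fin n → ℝ)) (y : Fin n → ℝ) : EReal :=
  ⨆ x ∈ X, ((dotp y x : ℝ) : EReal)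

/-- The linear map `𝒜 : ℝ^𝒜 → ℝⁿ`, `ν ↦ Σ_α ν_α α`. -/
noncomputable def Amap {n m : ℕ} (A : Fin m → Fin n → ℝ) (ν : Fin m → ℝ) : Fin n → ℝ :=
  fun j => ∑ i, ν i * A i j

/-- `N_β = {ν : ν_α ≥ 0 (α ≠ β), Σ ν_α = 0}`. -/
def Nbeta {m : ℕ} (b : Fin m) : Set (Fin m → ℝ) :=
  {ν | (∀ i, i ≠ b → 0 ≤ ν i) ∧ ∑ i, ν i = 0}

/-- Two vectors are proportional if one is a scalar multiple of the other. -/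
def Proportional {m : ℕ} (u v : Fin m → ℝ) : Prop :=
  ∃ t : ℝ, u = t • v ∨ v = t • u

/-- The augmented support function `ν ↦ σ_X(-𝒜ν)`. -/
noncomputable def sigA {n m : ℕ} (X : Set (Fin n → ℝ)) (A : Fin m → Fin n → ℝ)
    (ν : Fin m → ℝ) : EReal :=
  suppFn X (-(Amap A ν))

/-- The map `ν ↦ σ_X(-𝒜ν)` is affine on the segment `[ν1, ν2]`. -/
def SigmaAffineOnSeg {n m : ℕ} (X : Set (Fin n → ℝ)) (A : Fin m → Fin n → ℝ)
    (ν1 ν2 : Fin m → ℝ) : Prop :=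
  ∀ t : ℝ, t ∈ Set.Icc (0:ℝ) 1 →
    sigA X A (t • ν1 + (1 - t) • ν2) =
      (t : EReal) * sigA X A ν1 + ((1 - t : ℝ) : EReal) * sigA X A ν2

/-- `ν` is an `X`-circuit of `𝒜` (with negative index allowed only at `b`). -/
def IsXCircuit {n m : ℕ} (X : Set (Fin n → ℝ)) (A : Fin m → Fin n → ℝ)
    (b : Fin m) (ν : Fin m → ℝ) : Prop :=
  ν ∈ Nbeta b ∧ ν ≠ 0 ∧ sigA X A ν < ⊤ ∧
  ¬ ∃ (ν1 ν2 : Fin m → ℝ) (θ : ℝ), ν1 ∈ Nbeta b ∧ ν2 ∈ Nbeta b ∧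
      ¬ Proportional ν1 ν2 ∧ θ ∈ Set.Ioo (0:ℝ) 1 ∧
      ν = θ • ν1 + (1 - θ) • ν2 ∧ SigmaAffineOnSeg X A ν1 ν2

/-- All finite nonnegative combinations of elements of `S` (including `0`). -/
def coneHull {E : Type*} [AddCommMonoid E] [SMul ℝ E] (S : Set E) : Set E :=
  {x | ∃ (k : ℕ) (t : Fin k → ℝ) (v : Fin k → E),
    (∀ j, 0 ≤ t j) ∧ (∀ j, v j ∈ S) ∧ x = ∑ j, t j • v j}

/-- `v` is an edge generator of the convex cone `K`. -/
def IsEdgeGenerator {E : Type*} [AddCommMonoid E] [SMul ℝ E] (K : Set E) (v : E) : Prop :=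
  v ≠ 0 ∧ v ∈ K ∧ ∀ u ∈ K, ∀ w ∈ K, v = u + w →
    (∃ a : ℝ, 0 ≤ a ∧ u = a • v) ∧ (∃ b : ℝ, 0 ≤ b ∧ w = b • v)

/-- The `X`-AGE cone `C_X(𝒜, β)`, as a cone of coefficient vectors. -/
def AgeCone {n m : ℕ} (X : Set (Fin n → ℝ)) (A : Fin m → Fin n → ℝ) (b : Fin m) :
    Set (Fin m → ℝ) :=
  {c | (∀ i, i ≠ b → 0 ≤ c i) ∧ ∀ x ∈ X, 0 ≤ ∑ i, c i * Real.exp (dotp (A i) x)}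

/-- The `X`-SAGE cone `C_X(𝒜) = Σ_β C_X(𝒜, β)`. -/
def Sage {n m : ℕ} (X : Set (Fin n → ℝ)) (A : Fin m → Fin n → ℝ) : Set (Fin m → ℝ) :=
  {c | ∃ f : Fin m → (Fin m → ℝ), (∀ b, f b ∈ AgeCone X A b) ∧ c = ∑ b, f b}

/-- One summand of the relative entropy, with the conventions `0·log 0 = 0` and
`D = ∞` if `a > 0` while `c ≤ 0`. -/
noncomputable def relEnt (a c : ℝ) : EReal :=
  if a = 0 then 0 else if 0 < c then ((a * Real.log (a / c) : ℝ) : EReal) else ⊤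

/-- The relative entropy `D(ν_{∖β}, e · c_{∖β})`. -/
noncomputable def relEntSum {m : ℕ} (b : Fin m) (ν c : Fin m → ℝ) : EReal :=
  ∑ i ∈ Finset.univ.erase b, relEnt (ν i) (Real.exp 1 * c i)

/-- Condition (★): `ν ∈ N_β`, `ν ≠ 0`, `σ_X(-𝒜ν) + D(ν_{∖β}, e c_{∖β}) ≤ c_β`. -/
def StarCond {n m : ℕ} (X : Set (Fin n → ℝ)) (A : Fin m → Fin n → ℝ)
    (b : Fin m) (c ν : Fin m → ℝ) : Prop :=
  ν ∈ Nbeta b ∧ ν ≠ 0 ∧ sigA X A ν + relEntSum b ν c ≤ (c b : EReal)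

/-- The `λ`-witnessed AGE cone `C_X(𝒜, λ)` for a normalized `λ` with `λ_β = -1`. -/
noncomputable def WitnessCone {n m : ℕ} (X : Set (Fin n → ℝ)) (A : Fin m → Fin n → ℝ)
    (b : Fin m) (l : Fin m → ℝ) : Set (Fin m → ℝ) :=
  {c | (∀ i, i ≠ b → 0 ≤ c i) ∧
    (-(c b)) * Real.exp ((sigA X A l).toReal) ≤
      ∏ i ∈ Finset.univ.filter (fun i => 0 < l i), (c i / l i) ^ (l i)}

/-- Normalized `X`-circuits in `N_β`. -/
def LambdaB {n m : ℕ} (X : Set (Fin n → ℝ)) (A : Fin m → Fin n → ℝ) (b : Fin m) :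
    Set (Fin m → ℝ) :=
  {l | IsXCircuit X A b l ∧ l b = -1}

/-- All normalized `X`-circuits of `𝒜`. -/
def Lambda {n m : ℕ} (X : Set (Fin n → ℝ)) (A : Fin m → Fin n → ℝ) : Set (Fin m → ℝ) :=
  ⋃ b, LambdaB X A b

/-- Functional form `φ_λ = (λ, σ_X(-𝒜λ)) ∈ ℝ^𝒜 × ℝ`. -/
noncomputable def phiVec {n m : ℕ} (X : Set (Fin n → ℝ)) (A : Fin m → Fin n → ℝ)
    (l : Fin m → ℝ) : (Fin m → ℝ) × ℝ :=
  (l, (sigA X A l).toReal)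

/-- Functional form as an affine function `φ_λ(y) = Σ y_α λ_α + σ_X(-𝒜λ)`. -/
noncomputable def phiFun {n m : ℕ} (X : Set (Fin n → ℝ)) (A : Fin m → Fin n → ℝ)
    (l : Fin m → ℝ) (y : Fin m → ℝ) : ℝ :=
  (∑ i, y i * l i) + (sigA X A l).toReal

/-- The circuit graph `G_X(𝒜)`. -/
noncomputable def circuitGraph {n m : ℕ} (X : Set (Fin n → ℝ)) (A : Fin m → Fin n → ℝ) :
    Set ((Fin m → ℝ) × ℝ) :=
  coneHull ((phiVec X A '' Lambda X A) ∪ {((0 : Fin m → ℝ), (1 : ℝ))})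

/-- The reduced normalized `X`-circuits `Λ*_X(𝒜)`. -/
noncomputable def LambdaStar {n m : ℕ} (X : Set (Fin n → ℝ)) (A : Fin m → Fin n → ℝ) :
    Set (Fin m → ℝ) :=
  {l | l ∈ Lambda X A ∧ IsEdgeGenerator (circuitGraph X A) (phiVec X A l)}

/-- `λ`-witnessed AGE cone for a normalized circuit, with `β` recovered from `λ`. -/
noncomputable def WitnessConeL {n m : ℕ} (X : Set (Fin n → ℝ)) (A : Fin m → Fin n → ℝ)
    (l : Fin m → ℝ) : Set (Fin m → ℝ) :=
  ⋃ b ∈ {b : Fin m | l b = -1}, WitnessCone X A b l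

/-- Dual cone of a set of coefficient vectors in `ℝ^𝒜`. -/
def dualConeV {m : ℕ} (K : Set (Fin m → ℝ)) : Set (Fin m → ℝ) :=
  {v | ∀ c ∈ K, 0 ≤ ∑ i, v i * c i}

/-- Dual cone of a subset of `ℝ^𝒜 × ℝ`. -/
def dualConeP {m : ℕ} (K : Set ((Fin m → ℝ) × ℝ)) : Set ((Fin m → ℝ) × ℝ) :=
  {p | ∀ q ∈ K, 0 ≤ (∑ i, p.1 i * q.1 i) + p.2 * q.2}

/-- The basis functions `x ↦ exp(αᵀx)`, `α ∈ 𝒜`, are linearly independent on `X`. -/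
def ExpLinIndep {n m : ℕ} (X : Set (Fin n → ℝ)) (A : Fin m → Fin n → ℝ) : Prop :=
  LinearIndependent ℝ (fun i : Fin m => fun x : X => Real.exp (dotp (A i) (x : Fin n → ℝ)))

/-- `X` is a polyhedron: an intersection of finitely many closed halfspaces. -/
def IsPolyhedron {n : ℕ} (X : Set (Fin n → ℝ)) : Prop :=
  ∃ (k : ℕ) (a : Fin k → Fin n → ℝ) (bb : Fin k → ℝ),
    X = {x | ∀ i, dotp (a i) x ≤ bb i}

/-- Minkowski sum `Σ_{l ∈ Λ} C(l)` (finite sums, one summand per `l`;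
the empty sum gives `{0}`). -/
def MinkSumOver {m : ℕ} (Λ : Set (Fin m → ℝ)) (C : (Fin m → ℝ) → Set (Fin m → ℝ)) :
    Set (Fin m → ℝ) :=
  {c | ∃ (s : Finset (Fin m → ℝ)) (f : (Fin m → ℝ) → (Fin m → ℝ)),
    (↑s ⊆ Λ) ∧ (∀ l ∈ s, f l ∈ C l) ∧ c = ∑ l ∈ s, f l}

open Filter Topology

theorem Fintype.sum_subtype_of_forall_notMem_eq_zero {ι M : Type*} [Fintype ι] [AddCommMonoid M]
    (s : Set ι) [DecidablePred (· ∈ s)] (g : ι → M) (hg : ∀ i ∉ s, g i = 0) :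
    ∑ j : s, g j = ∑ i, g i := by
  rw [← Fintype.sum_subtype_add_sum_subtype (· ∈ s) g,
    Fintype.sum_eq_zero (fun i : {i // i ∉ s} => g i) fun i => hg i i.2, add_zero]

theorem affineIndependent_subtype_of_forall_eq_zero {ι k V : Type*} [Fintype ι] [Ring k]
    [AddCommGroup V] [Module k V] (p : ι → V) (s : Set ι)
    (h : ∀ μ : ι → k, (∀ i ∉ s, μ i = 0) → ∑ i, μ i = 0 → ∑ i, μ i • p i = 0 → μ = 0) :
    AffineIndependent k (fun j : s => p j) := by
  classical
  rw [affineIndependent_iff_of_fintype]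
  intro w hw hwp j
  set μ : ι → k := Subtype.val.extend w 0
  have hμw : ∀ j : s, μ j = w j := Subtype.val_injective.extend_apply w 0
  have hμs : ∀ i ∉ s, μ i = 0 := fun i hi =>
    Function.extend_apply' _ _ _ fun ⟨j, hj⟩ => hi (hj ▸ j.2)
  have hsum₀ : ∑ i, μ i = ∑ j : s, w j := by
    rw [← Fintype.sum_subtype_of_forall_notMem_eq_zero s μ hμs]
    simp only [hμw]
  have hsum₁ : ∑ i, μ i • p i = ∑ j : s, w j • p j := by
    rw [← Fintype.sum_subtype_of_forall_notMem_eq_zero s _ fun i hi => by rw [hμs i hi, zero_smul]]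
    simp only [hμw]
  have hμ0 : μ = 0 := by
    refine h μ hμs (hsum₀.trans hw) (hsum₁.trans ?_)
    rwa [Finset.weightedVSub_eq_linear_combination _ hw] at hwp
  rw [← hμw, hμ0, Pi.zero_apply]

theorem Amap_eq_sum_smul {n m : ℕ} (A : Fin m → Fin n → ℝ) (ν : Fin m → ℝ) :
    Amap A ν = ∑ i, ν i • A i := by
  ext j
  simp [Amap, Finset.sum_apply]

theorem Amap_add_smul {n m : ℕ} (A : Fin m → Fin n → ℝ) (ν μ : Fin m → ℝ) (s : ℝ) :
    Amap A (ν + s • μ) = Amap A ν + s • Amap A μ := by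
  simp only [Amap_eq_sum_smul, Pi.add_apply, Pi.smul_apply, smul_eq_mul, add_smul, mul_smul,
    Finset.sum_add_distrib, Finset.smul_sum]

theorem EReal.coe_mul_add_coe_one_sub_mul_self (c : EReal) {t : ℝ} (ht : t ∈ Set.Icc (0 : ℝ) 1) :
    (t : EReal) * c + ((1 - t : ℝ) : EReal) * c = c := by
  obtain ⟨h0, h1⟩ := ht
  rcases h0.eq_or_lt with rfl | h0
  · simp
  rcases h1.eq_or_lt with rfl | h1
  · simp
  have h1' : 0 < 1 - t := by linarith
  induction c using EReal.rec with
  | bot => rw [EReal.coe_mul_bot_of_pos h0, EReal.coe_mul_bot_of_pos h1', EReal.bot_add]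
  | top => rw [EReal.coe_mul_top_of_pos h0, EReal.coe_mul_top_of_pos h1', EReal.top_add_top]
  | coe r => norm_cast; ring

theorem sigmaAffineOnSeg_add_smul {n m : ℕ} (X : Set (Fin n → ℝ)) {A : Fin m → Fin n → ℝ}
    (ν : Fin m → ℝ) {μ : Fin m → ℝ} (hμ : Amap A μ = 0) (s₁ s₂ : ℝ) :
    SigmaAffineOnSeg X A (ν + s₁ • μ) (ν + s₂ • μ) := by
  have hconst : ∀ s : ℝ, sigA X A (ν + s • μ) = sigA X A ν := fun s => by
    rw [sigA, sigA, Amap_add_smul, hμ, smul_zero, add_zero]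
  intro t ht
  have hseg : t • (ν + s₁ • μ) + (1 - t) • (ν + s₂ • μ) = ν + (t * s₁ + (1 - t) * s₂) • μ := by
    module
  rw [hseg, hconst, hconst, hconst, EReal.coe_mul_add_coe_one_sub_mul_self _ ht]

theorem exists_pos_of_eventually_nhds_zero {P : ℝ → Prop} (h : ∀ᶠ s in 𝓝 (0 : ℝ), P s) :
    ∃ ε > 0, P ε ∧ P (-ε) := by
  have hneg : ∀ᶠ s in 𝓝 (0 : ℝ), P (-s) :=
    (continuous_neg.tendsto' (0 : ℝ) 0 neg_zero).eventually h
  exact (((h.and hneg).filter_mono nhdsWithin_le_nhds).and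
    (self_mem_nhdsWithin : Set.Ioi (0 : ℝ) ∈ 𝓝[>] 0)).exists.imp
    fun ε ⟨hP, hε⟩ => ⟨hε, hP⟩

namespace Nbeta

variable {m : ℕ} {b : Fin m} {ν : Fin m → ℝ}

theorem apply_lt_zero (hν : ν ∈ Nbeta b) (hν0 : ν ≠ 0) : ν b < 0 := by
  obtain ⟨hnn, hsum⟩ := hν
  by_contra! hb
  have hnn' : ∀ i ∈ Finset.univ, 0 ≤ ν i := fun i _ => by
    rcases eq_or_ne i b with rfl | hi
    · exact hb
    · exact hnn i hi
  exact hν0 (funext fun i => (Finset.sum_eq_zero_iff_of_nonneg hnn').1 hsum i (Finset.mem_univ i))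

theorem eventually_add_smul_mem (hν : ν ∈ Nbeta b) {μ : Fin m → ℝ}
    (hsupp : ∀ i, ¬ 0 < ν i → μ i = 0) (hsum : ∑ i, μ i = 0) :
    ∀ᶠ s in 𝓝 (0 : ℝ), ν + s • μ ∈ Nbeta b := by
  obtain ⟨hnn, hνsum⟩ := hν
  have hcoord : ∀ i, i ≠ b → ∀ᶠ s in 𝓝 (0 : ℝ), 0 ≤ ν i + s * μ i := by
    intro i hi
    by_cases hpos : 0 < ν i
    · have hlim : Tendsto (fun s : ℝ => ν i + s * μ i) (𝓝 0) (𝓝 (ν i)) :=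
        (continuous_const.add (continuous_id.mul continuous_const)).tendsto' 0 (ν i) (by simp)
      exact (hlim.eventually_const_lt hpos).mono fun s hs => hs.le
    · exact Eventually.of_forall fun s => by simp [hsupp i hpos, hnn i hi]
  filter_upwards [eventually_all.2 fun i => eventually_imp_distrib_left.2 (hcoord i)] with s hs
  refine ⟨hs, ?_⟩
  simp [Finset.sum_add_distrib, ← Finset.mul_sum, hνsum, hsum]

end Nbeta

theorem add_smul_ne_smul_add_smul {m : ℕ} {b : Fin m} {ν μ : Fin m → ℝ} (hνb : ν b ≠ 0)
    (hμb : μ b = 0) (hμ : μ ≠ 0) {s₁ s₂ : ℝ} (hs : s₁ ≠ s₂) (t : ℝ) :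
    ν + s₁ • μ ≠ t • (ν + s₂ • μ) := by
  intro h
  have ht : t = 1 := by
    have hb := congrFun h b
    simp only [Pi.add_apply, Pi.smul_apply, smul_eq_mul, hμb, mul_zero, add_zero] at hb
    exact (mul_eq_right₀ hνb).1 hb.symm
  rw [ht, one_smul, add_right_inj] at h
  exact hs (smul_left_injective ℝ hμ h)

theorem not_proportional_add_smul {m : ℕ} {b : Fin m} {ν μ : Fin m → ℝ} (hνb : ν b ≠ 0)
    (hμb : μ b = 0) (hμ : μ ≠ 0) {s₁ s₂ : ℝ} (hs : s₁ ≠ s₂) :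
    ¬ Proportional (ν + s₁ • μ) (ν + s₂ • μ) := by
  rintro ⟨t, h | h⟩
  · exact add_smul_ne_smul_add_smul hνb hμb hμ hs t h
  · exact add_smul_ne_smul_add_smul hνb hμb hμ hs.symm t h

namespace IsXCircuit

variable {n m : ℕ} {X : Set (Fin n → ℝ)} {A : Fin m → Fin n → ℝ} {b : Fin m} {ν : Fin m → ℝ}

theorem eq_zero_of_Amap_eq_zero (hν : IsXCircuit X A b ν) {μ : Fin m → ℝ}
    (hsupp : ∀ i, ¬ 0 < ν i → μ i = 0) (hsum : ∑ i, μ i = 0) (hAμ : Amap A μ = 0) : μ = 0 := by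
  obtain ⟨hνN, hν0, -, hindec⟩ := hν
  by_contra hμ
  have hνb := Nbeta.apply_lt_zero hνN hν0
  obtain ⟨ε, hε, hε₁, hε₂⟩ :=
    exists_pos_of_eventually_nhds_zero (Nbeta.eventually_add_smul_mem hνN hsupp hsum)
  refine hindec ⟨ν + ε • μ, ν + (-ε) • μ, 1 / 2, hε₁, hε₂,
    not_proportional_add_smul hνb.ne (hsupp b hνb.not_gt) hμ (by linarith), by norm_num,
    by module, sigmaAffineOnSeg_add_smul X ν hAμ ε (-ε)⟩

theorem affineIndependent_pos (hν : IsXCircuit X A b ν) :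
    AffineIndependent ℝ (fun i : {i | 0 < ν i} => A i) :=
  affineIndependent_subtype_of_forall_eq_zero A _ fun μ hsupp hsum hAμ =>
    hν.eq_zero_of_Amap_eq_zero hsupp hsum (by rwa [Amap_eq_sum_smul])

end IsXCircuit

theorem statement0_general {n m : ℕ} (X : Set (Fin n → ℝ)) (A : Fin m → Fin n → ℝ)
    (b : Fin m) (ν : Fin m → ℝ) (hν : IsXCircuit X A b ν) :
    AffineIndependent ℝ (Subtype.val : ↥(A '' {i : Fin m | 0 < ν i}) → (Fin n → ℝ)) := by
  rw [Set.image_eq_range]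
  exact hν.affineIndependent_pos.range

theorem statement0 {n m : ℕ} (X : Set (Fin n → ℝ)) (hXne : X.Nonempty) (hXcl : IsClosed X)
    (hXcv : Convex ℝ X) (A : Fin m → Fin n → ℝ) (hA : Function.Injective A) (hm : 0 < m)
    (b : Fin m) (ν : Fin m → ℝ) (hν : IsXCircuit X A b ν) :
    AffineIndependent ℝ (Subtype.val : ↥(A '' {i : Fin m | 0 < ν i}) → (Fin n → ℝ)) :=
  statement0_general X A b ν hν
end

section
/- Assume X is a polyhedron. Fix β ∈ 𝒜 and set P = −𝒜ᵀX + N_β° ⊆ ℝ^𝒜, where 𝒜ᵀX = {(αᵀx)_{α∈𝒜} : x ∈ X} and N_β° = {w ∈ ℝ^𝒜 : wᵀν ≤ 0 for all ν ∈ N_β} is the polar cone of N_β. Then a vector ν ∈ N_β ∖ {0} is an X-circuit of 𝒜 if and only if there exists a face F of P whose outer normal cone N_P(F) = {w ∈ ℝ^𝒜 : zᵀw = σ_P(w) for all z ∈ F} equals the ray {tν : t ≥ 0}. Consequently, the set Λ_X(𝒜) of normalized X-circuits of 𝒜 is finite. -/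
open Finset

/-- The polar cone `N_β°`. -/
def polarN {m : ℕ} (b : Fin m) : Set (Fin m → ℝ) :=
  {w | ∀ ν ∈ Nbeta b, dotp w ν ≤ 0}

/-- The polyhedron `P = -𝒜ᵀX + N_β°`. -/
noncomputable def Pset {n m : ℕ} (X : Set (Fin n → ℝ)) (A : Fin m → Fin n → ℝ) (b : Fin m) :
    Set (Fin m → ℝ) :=
  {p | ∃ x ∈ X, ∃ w ∈ polarN b, p = -(fun i => dotp (A i) x) + w}

/-- `F` is a face of the convex set `P`. -/
def IsFaceOf {E : Type*} [AddCommMonoid E] [Module ℝ E] (P F : Set E) : Prop :=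
  F ⊆ P ∧ Convex ℝ F ∧ ∀ p ∈ P, ∀ q ∈ P, ∀ t : ℝ, t ∈ Set.Ioo (0:ℝ) 1 →
    t • p + (1 - t) • q ∈ F → p ∈ F ∧ q ∈ F

/-!
By Minkowski–Weyl (via Fourier–Motzkin elimination) `X = conv S + cone T` with `S`, `T` finite,
hence `P = conv S' + cone T'`, and on `N_β` the support function of `P` is `σ_X(-𝒜·)` (off `N_β`
it is `+∞`). If `ν` is a circuit, every normal `w` of the face of `P` maximizing `ν` is a multiple
of `ν`: otherwise `ν` would lie strictly inside a segment `[w, ν + ε(ν - w)]` along which `σ_P` is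
affine. Conversely, if a face has normal cone `ℝ₊ν`, the endpoints of any segment through `ν` on
which `σ_P` is affine are normals of that face, hence multiples of `ν`. Finally, a normalized
circuit is determined by the generators of `P` on which it is tight.
-/

open PointedCone Pointwise Matrix

section FourierMotzkin

variable {E : Type*} [AddCommGroup E] [Module ℝ E]

theorem PointedCone.hull_induction {s : Set E} {p : E → Prop} (mem : ∀ x ∈ s, p x) (zero : p 0)
    (add : ∀ x y, p x → p y → p (x + y)) (smul : ∀ (c : ℝ) x, 0 ≤ c → p x → p (c • x))
    {x : E} (hx : x ∈ hull ℝ s) : p x := by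
  induction hx using Submodule.span_induction with
  | mem x h => exact mem x h
  | zero => exact zero
  | add x y _ _ hx hy => exact add x y hx hy
  | smul c x _ hx => exact smul c x c.2 hx

lemma PointedCone.mem_hull_finset_iff {s : Finset E} {x : E} :
    x ∈ hull ℝ (s : Set E) ↔ ∃ c : E → ℝ, (∀ y, 0 ≤ c y) ∧ ∑ y ∈ s, c y • y = x := by
  constructor
  · rw [hull, Submodule.mem_span_finset]
    rintro ⟨μ, -, rfl⟩
    exact ⟨fun y => μ y, fun y => (μ y).2, by simp [Nonneg.coe_smul]⟩
  · rintro ⟨c, hc, rfl⟩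
    exact sum_mem fun y hy => PointedCone.smul_mem _ (hc y) (subset_hull hy)

lemma PointedCone.map_mem_of_mem_hull {F : Type*} [AddCommGroup F] [Module ℝ F]
    (g : E →ₗ[ℝ] F) {C : PointedCone ℝ F} {s : Set E} (h : ∀ y ∈ s, g y ∈ C) {x : E}
    (hx : x ∈ hull ℝ s) : g x ∈ C :=
  mem_comap.1 (Submodule.span_le.2 (fun y hy => mem_comap.2 (h y hy)) hx)

variable (f : E →ₗ[ℝ] ℝ)

lemma map_nonpos_of_mem_hull {s : Set E} (h : ∀ y ∈ s, f y ≤ 0) {x : E} (hx : x ∈ hull ℝ s) :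
    f x ≤ 0 :=
  hull_induction h (by simp) (fun x y hx hy => by rw [map_add]; linarith)
    (fun c x hc hx => by rw [map_smul, smul_eq_mul]; exact mul_nonpos_of_nonneg_of_nonpos hc hx) hx

lemma eq_zero_of_mem_hull_of_map_nonpos {s : Set E} (h : ∀ y ∈ s, 0 < f y) {x : E}
    (hx : x ∈ hull ℝ s) (hfx : f x ≤ 0) : x = 0 := by
  have key : x = 0 ∨ 0 < f x := by
    refine hull_induction (p := fun x => x = 0 ∨ 0 < f x) (fun y hy => Or.inr (h y hy))
      (Or.inl rfl) ?_ ?_ hx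
    · rintro x y (rfl | hx) (rfl | hy)
      · simp
      all_goals simp only [map_add, zero_add, add_zero]
      · exact Or.inr hy
      · exact Or.inr hx
      · exact Or.inr (by linarith)
    · rintro c x hc (rfl | hx)
      · simp
      · rcases hc.eq_or_lt with rfl | hc
        · simp
        · exact Or.inr (by rw [map_smul, smul_eq_mul]; positivity)
  exact key.resolve_right (not_lt.2 hfx)

/-- One step of Fourier–Motzkin elimination: keep the generators on the nonpositive side of `f`
and combine each of them with each generator on the positive side into one on `f = 0`. -/
def fmGenerators (s : Set E) : Set E :=
  {y ∈ s | f y ≤ 0} ∪ Set.image2 (fun p q => f q • p - f p • q) {y ∈ s | f y ≤ 0} {y ∈ s | 0 < f y}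

lemma fmGenerators_finite {s : Set E} (hs : s.Finite) : (fmGenerators f s).Finite :=
  (hs.subset (Set.sep_subset s _)).union
    ((hs.subset (Set.sep_subset s _)).image2 _ (hs.subset (Set.sep_subset s _)))

/-- The map `(z, p) ↦ f p • z - f z • p` is bilinear, so it suffices to treat generators. -/
lemma smul_sub_smul_mem_hull_fmGenerators {s : Set E} {z p : E}
    (hz : z ∈ hull ℝ {y ∈ s | f y ≤ 0}) (hp : p ∈ hull ℝ {y ∈ s | 0 < f y}) :
    f p • z - f z • p ∈ hull ℝ (fmGenerators f s) := by
  have hgen : ∀ q ∈ {y ∈ s | 0 < f y}, f q • z - f z • q ∈ hull ℝ (fmGenerators f s) := by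
    intro q hq
    have hq' : ∀ y ∈ {y ∈ s | f y ≤ 0}, f q • y - f y • q ∈ hull ℝ (fmGenerators f s) :=
      fun y hy => subset_hull (Or.inr (Set.mem_image2_of_mem hy hq))
    exact map_mem_of_mem_hull (f q • LinearMap.id - f.smulRight q) hq' hz
  exact map_mem_of_mem_hull (f.smulRight z - f z • LinearMap.id) hgen hp

theorem hull_inter_setOf_map_nonpos (s : Set E) :
    (hull ℝ s : Set E) ∩ {x | f x ≤ 0} = hull ℝ (fmGenerators f s) := by
  apply Set.Subset.antisymm
  · rintro x ⟨hx, hfx : f x ≤ 0⟩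
    have hs : s = {y ∈ s | f y ≤ 0} ∪ {y ∈ s | 0 < f y} := by
      ext y; constructor
      · intro hy; rcases le_or_gt (f y) 0 with h | h
        exacts [Or.inl ⟨hy, h⟩, Or.inr ⟨hy, h⟩]
      · rintro (⟨hy, -⟩ | ⟨hy, -⟩) <;> exact hy
    rw [SetLike.mem_coe, hs, hull, Submodule.span_union, Submodule.mem_sup] at hx
    obtain ⟨z, hz, p, hp, rfl⟩ := hx
    have hzT : z ∈ hull ℝ (fmGenerators f s) := Submodule.span_mono Set.subset_union_left hz
    have hfz : f z ≤ 0 := map_nonpos_of_mem_hull f (fun y hy => hy.2) hz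
    have hfp : 0 ≤ f p := by
      simpa using map_nonpos_of_mem_hull (-f) (fun y hy => by simpa using hy.2.le) hp
    rw [map_add] at hfx
    rcases (neg_nonneg.2 hfz).eq_or_lt with h0 | hpos
    · rw [eq_zero_of_mem_hull_of_map_nonpos f (fun y hy => hy.2) hp (by linarith), add_zero]
      exact hzT
    · -- `(-f z) • (z + p) = (-f z - f p) • z + (f p • z - f z • p)`
      have hmem : (-f z) • (z + p) ∈ hull ℝ (fmGenerators f s) := by
        convert add_mem (PointedCone.smul_mem _ (by linarith : 0 ≤ -f z - f p) hzT)
          (smul_sub_smul_mem_hull_fmGenerators f hz hp) using 1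
        simp only [smul_add, sub_smul, neg_smul]; abel
      rw [← inv_smul_smul₀ hpos.ne' (z + p)]
      exact PointedCone.smul_mem _ (inv_nonneg.2 hpos.le) hmem
  · intro x hx
    refine ⟨Submodule.span_le.2 ?_ hx, map_nonpos_of_mem_hull f ?_ hx⟩
    · rintro y (⟨hy, -⟩ | ⟨p, ⟨hp, hfp⟩, q, ⟨hq, hfq⟩, rfl⟩)
      · exact subset_hull hy
      · simp only [sub_eq_add_neg, ← neg_smul]
        exact add_mem (PointedCone.smul_mem _ hfq.le (subset_hull hp))
          (PointedCone.smul_mem _ (neg_nonneg.2 hfp) (subset_hull hq))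
    · rintro y (⟨-, hy⟩ | ⟨p, -, q, -, rfl⟩)
      · exact hy
      · simp [mul_comm]

end FourierMotzkin

section MinkowskiWeyl

variable {σ : Type*} [Fintype σ]

/-- **Minkowski–Weyl** for cones, by iterated Fourier–Motzkin elimination. -/
theorem exists_finset_setOf_dotProduct_nonpos_eq_hull (s : Finset (σ → ℝ)) :
    ∃ t : Finset (σ → ℝ), {x | ∀ a ∈ s, a ⬝ᵥ x ≤ 0} = hull ℝ (t : Set (σ → ℝ)) := by
  classical
  induction s using Finset.induction_on with
  | empty =>
    let g : Finset (σ → ℝ) :=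
      Finset.univ.image (fun i => Pi.single i 1) ∪ Finset.univ.image (fun i => -Pi.single i 1)
    have hg : ∀ i, Pi.single i 1 ∈ hull ℝ (g : Set (σ → ℝ)) ∧
        -Pi.single i 1 ∈ hull ℝ (g : Set (σ → ℝ)) :=
      fun i => ⟨subset_hull (by simp [g]), subset_hull (by simp [g])⟩
    refine ⟨g, (Set.eq_univ_of_forall fun x => ?_).trans (Set.eq_univ_of_forall fun x => ?_).symm⟩
    · simp
    rw [SetLike.mem_coe, ← Finset.univ_sum_single x]
    refine sum_mem fun i _ => ?_
    have hxi : Pi.single i (x i) = x i • Pi.single i (1 : ℝ) := by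
      rw [← Pi.single_smul', smul_eq_mul, mul_one]
    rcases le_total 0 (x i) with h | h
    · simpa [hxi] using PointedCone.smul_mem _ h (hg i).1
    · simpa [hxi] using PointedCone.smul_mem _ (neg_nonneg.2 h) (hg i).2
  | insert a s _ ih =>
    obtain ⟨t, ht⟩ := ih
    let f : (σ → ℝ) →ₗ[ℝ] ℝ := dotProductBilin ℝ ℝ a
    refine ⟨(fmGenerators_finite f t.finite_toSet).toFinset, ?_⟩
    rw [Set.Finite.coe_toFinset, ← hull_inter_setOf_map_nonpos, ← ht]
    ext x
    simp [f, and_comm]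

end MinkowskiWeyl

lemma dotp_eq_dotProduct {n : ℕ} (y x : Fin n → ℝ) : dotp y x = y ⬝ᵥ x := rfl

section ConvAddCone

variable {E : Type*} [AddCommGroup E] [Module ℝ E] {S T : Set E} {z d : E}

def convAddCone (S T : Set E) : Set E := convexHull ℝ S + (hull ℝ T : Set E)

lemma convex_convAddCone : Convex ℝ (convAddCone S T) :=
  (convex_convexHull ℝ S).add (hull ℝ T).convex

lemma subset_convAddCone : S ⊆ convAddCone S T :=
  fun s hs => ⟨s, subset_convexHull ℝ S hs, 0, zero_mem _, add_zero s⟩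

lemma add_smul_mem_convAddCone (hz : z ∈ convAddCone S T) (hd : d ∈ T) {t : ℝ} (ht : 0 ≤ t) :
    z + t • d ∈ convAddCone S T := by
  obtain ⟨c, hc, e, he, rfl⟩ := hz
  exact ⟨c, hc, e + t • d, add_mem he (PointedCone.smul_mem _ ht (subset_hull hd)),
    (add_assoc c e _).symm⟩

lemma sum_smul_mem_convAddCone {ι : Type*} (R : Finset ι) (μ h : ι → ℝ) (v : ι → E)
    (hμ : ∀ i, 0 ≤ μ i) (hh : ∀ i ∈ R, 0 ≤ h i) (h₁ : ∑ i ∈ R, μ i * h i = 1) :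
    ∑ i ∈ R, μ i • v i ∈
      convAddCone ((fun i => (h i)⁻¹ • v i) '' {i ∈ R | 0 < h i}) (v '' {i ∈ R | h i = 0}) := by
  classical
  refine ⟨∑ i ∈ R.filter (0 < h ·), (μ i * h i) • ((h i)⁻¹ • v i), ?_,
    ∑ i ∈ R.filter (¬0 < h ·), μ i • v i, ?_, ?_⟩
  · refine (convex_convexHull ℝ _).sum_mem (fun i hi => ?_) ?_ (fun i hi => ?_)
    · exact mul_nonneg (hμ i) (hh i (Finset.mem_filter.1 hi).1)
    · rw [Finset.sum_filter_of_ne fun i hi hne => ?_, h₁]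
      exact lt_of_le_of_ne (hh i hi) (right_ne_zero_of_mul hne).symm
    · exact subset_convexHull ℝ _ ⟨i, by simpa using hi, rfl⟩
  · refine sum_mem fun i hi => PointedCone.smul_mem _ (hμ i) (subset_hull ⟨i, ?_, rfl⟩)
    obtain ⟨hi, hi'⟩ := Finset.mem_filter.1 hi
    exact ⟨hi, le_antisymm (not_lt.1 hi') (hh i hi)⟩
  · rw [← Finset.sum_filter_add_sum_filter_not R (0 < h ·)]
    congr 1
    refine Finset.sum_congr rfl fun i hi => ?_
    rw [smul_smul, mul_assoc, mul_inv_cancel₀ (Finset.mem_filter.1 hi).2.ne', mul_one]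

end ConvAddCone

section DotProduct

variable {σ : Type*} [Fintype σ] {S T : Set (σ → ℝ)} {u z : σ → ℝ}

lemma dotProduct_le_of_mem_convAddCone {r : ℝ} (hS : ∀ s ∈ S, u ⬝ᵥ s ≤ r)
    (hT : ∀ d ∈ T, u ⬝ᵥ d ≤ 0) (hz : z ∈ convAddCone S T) : u ⬝ᵥ z ≤ r := by
  obtain ⟨c, hc, e, he, rfl⟩ := hz
  have hc' : u ⬝ᵥ c ≤ r :=
    convexHull_min hS (convex_halfSpace_le (dotProductBilin ℝ ℝ u).isLinear _) hc
  have he' : u ⬝ᵥ e ≤ 0 := map_nonpos_of_mem_hull (dotProductBilin ℝ ℝ u) hT he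
  rw [dotProduct_add]
  linarith

lemma isMaxOn_convAddCone_iff (hz : z ∈ convAddCone S T) :
    IsMaxOn (u ⬝ᵥ ·) (convAddCone S T) z ↔ (∀ s ∈ S, u ⬝ᵥ s ≤ u ⬝ᵥ z) ∧ ∀ d ∈ T, u ⬝ᵥ d ≤ 0 := by
  refine ⟨fun h => ⟨fun s hs => h (subset_convAddCone hs), fun d hd => ?_⟩,
    fun ⟨hS, hT⟩ _ hy => dotProduct_le_of_mem_convAddCone hS hT hy⟩
  simpa [dotProduct_add] using h (add_smul_mem_convAddCone hz hd zero_le_one)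

lemma exists_isMaxOn_convAddCone {S : Finset (σ → ℝ)} (hS : S.Nonempty)
    (hT : ∀ d ∈ T, u ⬝ᵥ d ≤ 0) :
    ∃ s ∈ S, IsMaxOn (u ⬝ᵥ ·) (convAddCone (S : Set (σ → ℝ)) T) s := by
  obtain ⟨s, hs, hmax⟩ := S.exists_max_image (u ⬝ᵥ ·) hS
  exact ⟨s, hs, (isMaxOn_convAddCone_iff (subset_convAddCone hs)).2 ⟨hmax, hT⟩⟩

end DotProduct

section Homogenization

variable {n : ℕ}

lemma Fin.snoc_dotProduct_snoc (u x : Fin n → ℝ) (c t : ℝ) :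
    Fin.snoc (α := fun _ => ℝ) u c ⬝ᵥ Fin.snoc (α := fun _ => ℝ) x t = u ⬝ᵥ x + c * t := by
  simp [dotProduct, Fin.sum_univ_castSucc]

theorem exists_finset_dehomogenize_hull (R : Finset (Fin (n + 1) → ℝ))
    (hR : ∀ y ∈ R, 0 ≤ y (Fin.last n)) :
    ∃ S T : Finset (Fin n → ℝ), (∀ s ∈ S, Fin.snoc s 1 ∈ hull ℝ (R : Set (Fin (n + 1) → ℝ))) ∧
      (∀ d ∈ T, Fin.snoc d 0 ∈ hull ℝ (R : Set (Fin (n + 1) → ℝ))) ∧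
      ∀ x, Fin.snoc x 1 ∈ hull ℝ (R : Set (Fin (n + 1) → ℝ)) →
        x ∈ convAddCone (S : Set (Fin n → ℝ)) T := by
  classical
  refine ⟨(R.filter (0 < · (Fin.last n))).image (fun y => (y (Fin.last n))⁻¹ • Fin.init y),
    (R.filter (· (Fin.last n) = 0)).image Fin.init, ?_, ?_, fun x hx => ?_⟩
  · simp only [Finset.mem_image, Finset.mem_filter]
    rintro _ ⟨y, ⟨hy, hpos⟩, rfl⟩
    have hsnoc : Fin.snoc ((y (Fin.last n))⁻¹ • Fin.init y) 1 = (y (Fin.last n))⁻¹ • y := by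
      conv_rhs => rw [← Fin.snoc_init_self y]
      ext i
      refine Fin.lastCases ?_ (fun i => ?_) i <;> simp [Fin.init, hpos.ne']
    rw [hsnoc]
    exact PointedCone.smul_mem _ (inv_nonneg.2 hpos.le) (subset_hull hy)
  · simp only [Finset.mem_image, Finset.mem_filter]
    rintro _ ⟨y, ⟨hy, hzero⟩, rfl⟩
    have hsnoc : Fin.snoc (Fin.init y) (0 : ℝ) = y := by rw [← hzero, Fin.snoc_init_self]
    rw [hsnoc]
    exact subset_hull hy
  obtain ⟨μ, hμ0, hμ⟩ := mem_hull_finset_iff.1 hx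
  have hinit : x = ∑ y ∈ R, μ y • Fin.init y := by
    funext i
    simpa [Finset.sum_apply, Fin.init] using (congrFun hμ i.castSucc).symm
  have hlast : ∑ y ∈ R, μ y * y (Fin.last n) = 1 := by
    simpa [Finset.sum_apply] using congrFun hμ (Fin.last n)
  rw [hinit]
  simpa using sum_smul_mem_convAddCone R μ (· (Fin.last n)) Fin.init hμ0 hR hlast

/-- **Minkowski–Weyl** for polyhedra: `x ∈ X` iff `(x, 1)` lies in the cone
`{(x, t) | 0 ≤ t, a_k ⬝ x ≤ b_k t}`, which is finitely generated. -/
theorem IsPolyhedron.exists_eq_convAddCone {X : Set (Fin n → ℝ)} (hX : IsPolyhedron X) :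
    ∃ S T : Finset (Fin n → ℝ), X = convAddCone (S : Set (Fin n → ℝ)) T := by
  obtain ⟨k, a, bb, rfl⟩ := hX
  obtain ⟨R, hR⟩ := exists_finset_setOf_dotProduct_nonpos_eq_hull
    (insert (Fin.snoc 0 (-1)) (Finset.univ.image fun i => Fin.snoc (a i) (-bb i)))
  have hC : ∀ x t, Fin.snoc x t ∈ hull ℝ (R : Set (Fin (n + 1) → ℝ)) ↔
      0 ≤ t ∧ ∀ i, a i ⬝ᵥ x ≤ bb i * t := by
    intro x t
    rw [← SetLike.mem_coe, ← hR]
    simp [Fin.snoc_dotProduct_snoc]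
  obtain ⟨S, T, hS, hT, hST⟩ := exists_finset_dehomogenize_hull R fun y hy =>
    ((hC _ _).1 (by rw [Fin.snoc_init_self]; exact subset_hull hy)).1
  refine ⟨S, T, Set.Subset.antisymm
    (fun x hx => hST x ((hC x 1).2 ⟨zero_le_one, fun i => by rw [mul_one]; exact hx i⟩))
    fun z hz i => dotProduct_le_of_mem_convAddCone (fun s hs => ?_) (fun d hd => ?_) hz⟩
  · simpa using ((hC s 1).1 (hS s hs)).2 i
  · simpa using ((hC d 0).1 (hT d hd)).2 i

end Homogenization

section SupportFunction

open Filter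

variable {N : ℕ} {P : Set (Fin N → ℝ)} {u z : Fin N → ℝ}

lemma coe_le_suppFn (hz : z ∈ P) : ((u ⬝ᵥ z : ℝ) : EReal) ≤ suppFn P u :=
  le_iSup₂ (f := fun x _ => ((u ⬝ᵥ x : ℝ) : EReal)) z hz

lemma suppFn_ne_bot (hP : P.Nonempty) : suppFn P u ≠ ⊥ :=
  ne_bot_of_le_ne_bot (EReal.coe_ne_bot _) (coe_le_suppFn hP.some_mem)

lemma suppFn_eq_of_isMaxOn (hz : z ∈ P) (h : IsMaxOn (u ⬝ᵥ ·) P z) :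
    suppFn P u = (u ⬝ᵥ z : ℝ) :=
  le_antisymm (iSup₂_le fun _ hx => EReal.coe_le_coe_iff.2 (h hx)) (coe_le_suppFn hz)

lemma coe_eq_suppFn_iff (hz : z ∈ P) :
    ((u ⬝ᵥ z : ℝ) : EReal) = suppFn P u ↔ IsMaxOn (u ⬝ᵥ ·) P z :=
  ⟨fun h _ hx => EReal.coe_le_coe_iff.1 (h ▸ coe_le_suppFn hx),
    fun h => (suppFn_eq_of_isMaxOn hz h).symm⟩

lemma suppFn_eq_top_of_add_smul_mem {d : Fin N → ℝ}
    (hd : ∀ t : ℝ, 0 ≤ t → z + t • d ∈ P) (h : 0 < u ⬝ᵥ d) : suppFn P u = ⊤ := by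
  refine (EReal.eq_top_iff_forall_lt _).2 fun r => ?_
  have hlim : Tendsto (fun t => u ⬝ᵥ z + t * (u ⬝ᵥ d)) atTop atTop :=
    tendsto_atTop_add_const_left _ _ (tendsto_id.atTop_mul_const h)
  obtain ⟨t, ht0, ht⟩ := ((eventually_ge_atTop 0).and (hlim.eventually_gt_atTop r)).exists
  refine (EReal.coe_lt_coe_iff.2 ht).trans_le ?_
  simpa [dotProduct_add, dotProduct_smul] using coe_le_suppFn (u := u) (hd t ht0)

lemma exists_isMaxOn_of_suppFn_lt_top {S T : Finset (Fin N → ℝ)} (hS : S.Nonempty)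
    (h : suppFn (convAddCone (S : Set (Fin N → ℝ)) T) u < ⊤) :
    ∃ s ∈ S, IsMaxOn (u ⬝ᵥ ·) (convAddCone (S : Set (Fin N → ℝ)) T) s := by
  refine exists_isMaxOn_convAddCone hS fun d hd => not_lt.1 fun hpos => h.ne ?_
  obtain ⟨s, hs⟩ := hS
  exact suppFn_eq_top_of_add_smul_mem
    (fun t ht => add_smul_mem_convAddCone (subset_convAddCone hs) hd ht) hpos

end SupportFunction

lemma EReal.exists_coe_of_coe_eq_convex_combination {θ : ℝ} (hθ0 : 0 < θ) (hθ1 : θ < 1)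
    {x y : EReal} (hx : x ≠ ⊥) (hy : y ≠ ⊥) {r : ℝ}
    (h : (r : EReal) = θ * x + ((1 - θ : ℝ) : EReal) * y) :
    ∃ r₁ r₂ : ℝ, x = r₁ ∧ y = r₂ := by
  have hθ1' : (0 : ℝ) < 1 - θ := by linarith
  induction x using EReal.rec with
  | bot => exact absurd rfl hx
  | top =>
    induction y using EReal.rec with
    | bot => exact absurd rfl hy
    | top =>
      rw [EReal.coe_mul_top_of_pos hθ0, EReal.coe_mul_top_of_pos hθ1', EReal.top_add_top] at h
      exact absurd h (EReal.coe_ne_top r)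
    | coe y =>
      rw [EReal.coe_mul_top_of_pos hθ0, ← EReal.coe_mul, EReal.top_add_coe] at h
      exact absurd h (EReal.coe_ne_top r)
  | coe x =>
    induction y using EReal.rec with
    | bot => exact absurd rfl hy
    | top =>
      rw [EReal.coe_mul_top_of_pos hθ1', ← EReal.coe_mul, EReal.coe_add_top] at h
      exact absurd h (EReal.coe_ne_top r)
    | coe y => exact ⟨x, y, rfl, rfl⟩

section NormalCone

variable {N : ℕ} {P F : Set (Fin N → ℝ)}

def normalCone (P F : Set (Fin N → ℝ)) : Set (Fin N → ℝ) :=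
  {w | ∀ z ∈ F, ((dotp z w : ℝ) : EReal) = suppFn P w}

lemma mem_normalCone_iff (hF : F ⊆ P) {w : Fin N → ℝ} :
    w ∈ normalCone P F ↔ ∀ z ∈ F, IsMaxOn (w ⬝ᵥ ·) P z := by
  simp only [normalCone, Set.mem_ofPred_eq, dotp_eq_dotProduct, dotProduct_comm _ w]
  exact forall₂_congr fun z hz => coe_eq_suppFn_iff (hF hz)

lemma isFaceOf_setOf_isMaxOn (hP : Convex ℝ P) (u : Fin N → ℝ) :
    IsFaceOf P {z ∈ P | IsMaxOn (u ⬝ᵥ ·) P z} := by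
  refine ⟨fun z hz => hz.1, fun z₁ hz₁ z₂ hz₂ a c ha hc hac => ⟨hP hz₁.1 hz₂.1 ha hc hac,
    fun y hy => ?_⟩, fun p hp q hq t ⟨ht0, ht1⟩ hF => ?_⟩
  · have h₁ : u ⬝ᵥ y ≤ u ⬝ᵥ z₁ := hz₁.2 hy
    have h₂ : u ⬝ᵥ y ≤ u ⬝ᵥ z₂ := hz₂.2 hy
    have := mul_le_mul_of_nonneg_left h₁ ha
    have := mul_le_mul_of_nonneg_left h₂ hc
    calc u ⬝ᵥ y = (a + c) * u ⬝ᵥ y := by rw [hac, one_mul]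
      _ ≤ u ⬝ᵥ (a • z₁ + c • z₂) := by
        simp only [dotProduct_add, dotProduct_smul, smul_eq_mul]
        linarith
  · have hmax : ∀ y ∈ P, u ⬝ᵥ y ≤ t * u ⬝ᵥ p + (1 - t) * u ⬝ᵥ q := fun y hy => by
      simpa [dotProduct_add, dotProduct_smul] using hF.2 hy
    have hpq : u ⬝ᵥ p = u ⬝ᵥ q := by
      have := hmax p hp; have := hmax q hq
      apply le_antisymm <;> nlinarith
    have hval : t * u ⬝ᵥ p + (1 - t) * u ⬝ᵥ q = u ⬝ᵥ p := by rw [hpq]; ring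
    exact ⟨⟨hp, fun y hy => (hmax y hy).trans hval.le⟩,
      ⟨hq, fun y hy => (hmax y hy).trans (hval.trans hpq).le⟩⟩

lemma mem_normalCone_of_suppFn_eq_add (hF : F ⊆ P) (hF₀ : F.Nonempty) {ν₁ ν₂ : Fin N → ℝ}
    {θ : ℝ} (hθ0 : 0 < θ) (hθ1 : θ < 1) (hν : θ • ν₁ + (1 - θ) • ν₂ ∈ normalCone P F)
    (h : suppFn P (θ • ν₁ + (1 - θ) • ν₂) =
      θ * suppFn P ν₁ + ((1 - θ : ℝ) : EReal) * suppFn P ν₂) :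
    ν₁ ∈ normalCone P F ∧ ν₂ ∈ normalCone P F := by
  simp only [mem_normalCone_iff hF] at hν ⊢
  obtain ⟨z, hz⟩ := hF₀
  have hP : P.Nonempty := ⟨z, hF hz⟩
  rw [← (coe_eq_suppFn_iff (hF hz)).2 (hν z hz)] at h
  obtain ⟨r₁, r₂, hr₁, hr₂⟩ := EReal.exists_coe_of_coe_eq_convex_combination hθ0 hθ1
    (suppFn_ne_bot hP) (suppFn_ne_bot hP) h
  rw [hr₁, hr₂, ← EReal.coe_mul, ← EReal.coe_mul, ← EReal.coe_add, EReal.coe_eq_coe_iff,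
    add_dotProduct, smul_dotProduct, smul_dotProduct, smul_eq_mul, smul_eq_mul] at h
  -- on `F`, the value of `θ • ν₁ + (1 - θ) • ν₂` is `θ * r₁ + (1 - θ) * r₂`, where `r₁`, `r₂`
  -- bound the values of `ν₁`, `ν₂`; so both bounds are attained on `F`
  have htight : ∀ y ∈ F, ν₁ ⬝ᵥ y = r₁ ∧ ν₂ ⬝ᵥ y = r₂ := fun y hy => by
    have hy₁ : ν₁ ⬝ᵥ y ≤ r₁ := EReal.coe_le_coe_iff.1 (hr₁ ▸ coe_le_suppFn (hF hy))
    have hy₂ : ν₂ ⬝ᵥ y ≤ r₂ := EReal.coe_le_coe_iff.1 (hr₂ ▸ coe_le_suppFn (hF hy))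
    have hyz : (θ • ν₁ + (1 - θ) • ν₂) ⬝ᵥ y = (θ • ν₁ + (1 - θ) • ν₂) ⬝ᵥ z :=
      le_antisymm (hν z hz (hF hy)) (hν y hy (hF hz))
    simp only [add_dotProduct, smul_dotProduct, smul_eq_mul] at hyz
    constructor <;> nlinarith
  exact ⟨fun y hy => (coe_eq_suppFn_iff (hF hy)).1 (by rw [hr₁, (htight y hy).1]),
    fun y hy => (coe_eq_suppFn_iff (hF hy)).1 (by rw [hr₂, (htight y hy).2])⟩

end NormalCone

section Perturbation

open Filter Topology

lemma eventually_add_mul_nonpos {a c : ℝ} (ha : a ≤ 0) (hc : a = 0 → c ≤ 0) :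
    ∀ᶠ ε in 𝓝[>] (0 : ℝ), a + ε * c ≤ 0 := by
  rcases ha.lt_or_eq with ha | rfl
  · have hlim : Tendsto (fun ε => a + ε * c) (𝓝 0) (𝓝 a) :=
      (continuous_const.add (continuous_id.mul continuous_const)).tendsto' 0 a (by simp)
    exact nhdsWithin_le_nhds ((hlim.eventually (gt_mem_nhds ha)).mono fun _ => le_of_lt)
  · filter_upwards [self_mem_nhdsWithin] with ε hε
    simpa using mul_nonpos_of_nonneg_of_nonpos (le_of_lt hε) (hc rfl)

variable {σ : Type*} [Fintype σ] {S T : Finset (σ → ℝ)} {ν w z : σ → ℝ}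

lemma eventually_isMaxOn_add_smul_sub (hz : z ∈ convAddCone (S : Set (σ → ℝ)) T)
    (hν : IsMaxOn (ν ⬝ᵥ ·) (convAddCone (S : Set (σ → ℝ)) T) z)
    (hw : IsMaxOn (w ⬝ᵥ ·) (convAddCone (S : Set (σ → ℝ)) T) z)
    (hS : ∀ s ∈ S, IsMaxOn (ν ⬝ᵥ ·) (convAddCone (S : Set (σ → ℝ)) T) s →
      IsMaxOn (w ⬝ᵥ ·) (convAddCone (S : Set (σ → ℝ)) T) s)
    (hT : ∀ d ∈ T, ν ⬝ᵥ d = 0 → w ⬝ᵥ d = 0) :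
    ∀ᶠ ε in 𝓝[>] (0 : ℝ),
      IsMaxOn ((ν + ε • (ν - w)) ⬝ᵥ ·) (convAddCone (S : Set (σ → ℝ)) T) z := by
  obtain ⟨hνS, hνT⟩ := (isMaxOn_convAddCone_iff hz).1 hν
  have hS' : ∀ᶠ ε in 𝓝[>] (0 : ℝ), ∀ s ∈ S,
      (ν ⬝ᵥ s - ν ⬝ᵥ z) + ε * ((ν - w) ⬝ᵥ s - (ν - w) ⬝ᵥ z) ≤ 0 := by
    refine (eventually_all_finset S).2 fun s hs =>
      eventually_add_mul_nonpos (sub_nonpos.2 (hνS s hs)) fun h0 => ?_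
    have hsmax := hS s hs fun y hy => (hν hy).trans (sub_eq_zero.1 h0).ge
    have h₁ : w ⬝ᵥ s ≤ w ⬝ᵥ z := hw (subset_convAddCone hs)
    have h₂ : w ⬝ᵥ z ≤ w ⬝ᵥ s := hsmax hz
    simp only [sub_dotProduct]
    linarith
  have hT' : ∀ᶠ ε in 𝓝[>] (0 : ℝ), ∀ d ∈ T, ν ⬝ᵥ d + ε * ((ν - w) ⬝ᵥ d) ≤ 0 :=
    (eventually_all_finset T).2 fun d hd => eventually_add_mul_nonpos (hνT d hd) fun h0 => by
      simp [sub_dotProduct, h0, hT d hd h0]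
  filter_upwards [hS', hT'] with ε hεS hεT
  refine (isMaxOn_convAddCone_iff hz).2 ⟨fun s hs => ?_, fun d hd => ?_⟩
  · have := hεS s hs
    simp only [add_dotProduct, smul_dotProduct, smul_eq_mul, sub_dotProduct] at this ⊢
    linarith
  · simpa [add_dotProduct, smul_dotProduct] using hεT d hd

end Perturbation

section Proportional

variable {m : ℕ}

lemma proportional_iff_not_linearIndependent {u v : Fin m → ℝ} :
    Proportional u v ↔ ¬LinearIndependent ℝ ![u, v] := by
  rw [LinearIndependent.pair_iff]
  constructor
  · rintro ⟨t, rfl | rfl⟩ h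
    · exact one_ne_zero (h 1 (-t) (by simp)).1
    · exact one_ne_zero (h (-t) 1 (by simp)).2
  · intro h
    push Not at h
    obtain ⟨s, t, hst, hne⟩ := h
    by_cases hs : s = 0
    · refine ⟨0, Or.inr ?_⟩
      subst hs
      simpa [hne rfl] using hst
    · refine ⟨-(s⁻¹ * t), Or.inl ?_⟩
      rw [← inv_smul_smul₀ hs u, eq_neg_of_add_eq_zero_left hst, smul_neg, smul_smul, neg_smul]

lemma linearIndependent_pair_add_smul_sub {w ν : Fin m → ℝ} (h : LinearIndependent ℝ ![w, ν])
    {ε : ℝ} (hε : 0 < ε) : LinearIndependent ℝ ![w, ν + ε • (ν - w)] := by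
  rw [LinearIndependent.pair_iff] at h ⊢
  intro s t hst
  obtain ⟨h₁, h₂⟩ := h (s - t * ε) (t * (1 + ε)) (by rw [← hst]; module)
  have ht : t = 0 := by
    rcases mul_eq_zero.1 h₂ with h | h
    · exact h
    · linarith
  exact ⟨by simpa [ht] using h₁, ht⟩

end Proportional

section Pset

variable {n m : ℕ} {X : Set (Fin n → ℝ)} {A : Fin m → Fin n → ℝ} {b : Fin m}

lemma convex_nbeta (b : Fin m) : Convex ℝ (Nbeta b) := by
  rintro x ⟨hx, hxs⟩ y ⟨hy, hys⟩ s t hs ht -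
  refine ⟨fun i hi => ?_, ?_⟩
  · simp only [Pi.add_apply, Pi.smul_apply, smul_eq_mul]
    exact add_nonneg (mul_nonneg hs (hx i hi)) (mul_nonneg ht (hy i hi))
  · simp [Finset.sum_add_distrib, ← Finset.mul_sum, hxs, hys]

lemma eq_zero_of_smul_mem_nbeta {ν : Fin m → ℝ} {c : ℝ} (hν : ν ∈ Nbeta b) (hc : c < 0)
    (h : c • ν ∈ Nbeta b) : ν = 0 := by
  have hoff : ∀ i ≠ b, ν i = 0 := fun i hi =>
    le_antisymm (nonpos_of_mul_nonneg_right (h.1 i hi) hc) (hν.1 i hi)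
  have hb : ν b = 0 := by
    simpa [Finset.sum_eq_single b fun i _ hi => hoff i hi] using hν.2
  funext i
  by_cases hi : i = b
  · rw [hi, hb, Pi.zero_apply]
  · exact hoff i hi

lemma mem_polarN_iff {w : Fin m → ℝ} : w ∈ polarN b ↔ ∀ i, w i ≤ w b := by
  classical
  constructor
  · intro hw i
    have hν : Pi.single i 1 - Pi.single b 1 ∈ Nbeta b := by
      refine ⟨fun j hj => ?_, by simp [Finset.sum_sub_distrib]⟩
      simp only [Pi.sub_apply, Pi.single_apply, hj, if_false, sub_zero]
      split_ifs <;> norm_num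
    simpa [dotp_eq_dotProduct, dotProduct_sub] using hw _ hν
  · rintro hw ν ⟨hν, hsum⟩
    have : dotp w ν = ∑ i, (w i - w b) * ν i := by
      simp [dotp, sub_mul, Finset.sum_sub_distrib, ← Finset.mul_sum, hsum]
    rw [this]
    refine Finset.sum_nonpos fun i _ => ?_
    by_cases hi : i = b
    · simp [hi]
    · exact mul_nonpos_of_nonpos_of_nonneg (sub_nonpos.2 (hw i)) (hν i hi)

lemma smul_mem_polarN {w : Fin m → ℝ} {t : ℝ} (ht : 0 ≤ t) (hw : w ∈ polarN b) :
    t • w ∈ polarN b :=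
  mem_polarN_iff.2 fun i => mul_le_mul_of_nonneg_left (mem_polarN_iff.1 hw i) ht

lemma exists_finset_polarN_eq_hull (b : Fin m) :
    ∃ G : Finset (Fin m → ℝ), polarN b = hull ℝ (G : Set (Fin m → ℝ)) := by
  classical
  obtain ⟨G, hG⟩ := exists_finset_setOf_dotProduct_nonpos_eq_hull
    (Finset.univ.image fun i => Pi.single i 1 - Pi.single b 1)
  refine ⟨G, ?_⟩
  rw [← hG]
  ext w
  simp [mem_polarN_iff, sub_dotProduct]

lemma pset_eq_image_add : Pset X A b = (fun x => -(A *ᵥ x)) '' X + polarN b := by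
  ext p
  constructor
  · rintro ⟨x, hx, w, hw, rfl⟩
    exact ⟨_, ⟨x, hx, rfl⟩, w, hw, rfl⟩
  · rintro ⟨_, ⟨x, hx, rfl⟩, w, hw, rfl⟩
    exact ⟨x, hx, w, hw, rfl⟩

lemma exists_pset_eq_convAddCone {S T : Finset (Fin n → ℝ)}
    (hX : X = convAddCone (S : Set (Fin n → ℝ)) T) (b : Fin m) :
    ∃ T' : Finset (Fin m → ℝ),
      Pset X A b = convAddCone ↑(S.image fun x => -(A *ᵥ x)) (T' : Set (Fin m → ℝ)) := by
  classical
  obtain ⟨G, hG⟩ := exists_finset_polarN_eq_hull b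
  let L : (Fin n → ℝ) →ₗ[ℝ] (Fin m → ℝ) := -mulVecLin A
  refine ⟨T.image L ∪ G, ?_⟩
  have hL : (fun x => -(A *ᵥ x)) = L := rfl
  have hhull : L '' (hull ℝ (T : Set (Fin n → ℝ)) : Set (Fin n → ℝ)) = hull ℝ (L '' T) := by
    rw [← LinearMap.coe_restrictScalars {c : ℝ // 0 ≤ c} L, ← Submodule.map_coe, Submodule.map_span]
  rw [pset_eq_image_add, hX, hG, convAddCone, convAddCone, hL, Set.image_add,
    LinearMap.image_convexHull, hhull, add_assoc, ← Submodule.coe_sup, ← Submodule.span_union]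
  simp

lemma dotProduct_neg_mulVec (u : Fin m → ℝ) (x : Fin n → ℝ) :
    u ⬝ᵥ -(A *ᵥ x) = -Amap A u ⬝ᵥ x := by
  rw [dotProduct_neg, neg_dotProduct]
  exact congrArg _ (dotProduct_mulVec u A x)

lemma suppFn_pset_of_mem_nbeta {u : Fin m → ℝ} (hu : u ∈ Nbeta b) :
    suppFn (Pset X A b) u = sigA X A u := by
  rw [pset_eq_image_add]
  apply le_antisymm
  · refine iSup₂_le ?_
    rintro _ ⟨_, ⟨x, hx, rfl⟩, w, hw, rfl⟩
    have hwu : u ⬝ᵥ w ≤ 0 := dotProduct_comm u w ▸ hw u hu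
    refine le_trans ?_ (coe_le_suppFn hx)
    rw [EReal.coe_le_coe_iff, dotp_eq_dotProduct, dotProduct_add, dotProduct_neg_mulVec]
    linarith
  · refine iSup₂_le fun x hx => ?_
    have h0 : (0 : Fin m → ℝ) ∈ polarN b := fun ν _ => by simp [dotp]
    have hz : -(A *ᵥ x) ∈ (fun x => -(A *ᵥ x)) '' X + polarN b := by
      simpa using Set.add_mem_add (Set.mem_image_of_mem _ hx) h0
    have := coe_le_suppFn (u := u) hz
    rwa [dotProduct_neg_mulVec] at this

lemma mem_nbeta_of_suppFn_pset_lt_top (hX : X.Nonempty) {u : Fin m → ℝ}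
    (h : suppFn (Pset X A b) u < ⊤) : u ∈ Nbeta b := by
  classical
  by_contra hu
  obtain ⟨x, hx⟩ := hX
  obtain ⟨d, hd, hud⟩ : ∃ d ∈ polarN b, 0 < u ⬝ᵥ d := by
    simp only [Nbeta, Set.mem_ofPred_eq, not_and_or, not_forall, not_le] at hu
    rcases hu with ⟨i, hib, hi⟩ | hsum
    · refine ⟨-Pi.single i 1, mem_polarN_iff.2 fun j => ?_, by simpa using hi⟩
      by_cases hj : j = i <;> simp [hj, Ne.symm hib]
    · refine ⟨fun _ => ∑ i, u i, mem_polarN_iff.2 fun _ => le_rfl, ?_⟩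
      simpa [dotProduct, ← Finset.sum_mul, ← sq] using sq_pos_of_ne_zero hsum
  refine h.ne (suppFn_eq_top_of_add_smul_mem (z := -(A *ᵥ x)) (fun t ht => ?_) hud)
  rw [pset_eq_image_add]
  exact ⟨_, ⟨x, hx, rfl⟩, t • d, smul_mem_polarN ht hd, rfl⟩

end Pset

section Circuit

variable {n m : ℕ} {X : Set (Fin n → ℝ)} {A : Fin m → Fin n → ℝ} {b : Fin m}

lemma sigmaAffineOnSeg_of_isMaxOn {ν₁ ν₂ z : Fin m → ℝ} (h₁ : ν₁ ∈ Nbeta b) (h₂ : ν₂ ∈ Nbeta b)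
    (hz : z ∈ Pset X A b) (hz₁ : IsMaxOn (ν₁ ⬝ᵥ ·) (Pset X A b) z)
    (hz₂ : IsMaxOn (ν₂ ⬝ᵥ ·) (Pset X A b) z) : SigmaAffineOnSeg X A ν₁ ν₂ := by
  rintro t ⟨ht0, ht1⟩
  have hmax : IsMaxOn ((t • ν₁ + (1 - t) • ν₂) ⬝ᵥ ·) (Pset X A b) z := fun y hy => by
    have := mul_le_mul_of_nonneg_left (hz₁ hy) ht0
    have := mul_le_mul_of_nonneg_left (hz₂ hy) (sub_nonneg.2 ht1)
    simp only [Set.mem_ofPred_eq, add_dotProduct, smul_dotProduct, smul_eq_mul]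
    linarith
  rw [← suppFn_pset_of_mem_nbeta h₁, ← suppFn_pset_of_mem_nbeta h₂,
    ← suppFn_pset_of_mem_nbeta (convex_nbeta b h₁ h₂ ht0 (sub_nonneg.2 ht1) (by ring)),
    suppFn_eq_of_isMaxOn hz hmax, suppFn_eq_of_isMaxOn hz hz₁, suppFn_eq_of_isMaxOn hz hz₂]
  simp only [add_dotProduct, smul_dotProduct, smul_eq_mul, EReal.coe_add, EReal.coe_mul]

/-- If `w` were not proportional to `ν`, then for small `ε > 0` the point `z` would still maximize
`ν' = ν + ε • (ν - w)`; as it maximizes `w` too, `σ_X(-𝒜·)` would be affine on `[w, ν']`, a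
segment having `ν` in its interior. -/
theorem eq_smul_of_isXCircuit {S T : Finset (Fin m → ℝ)}
    (hP : Pset X A b = convAddCone (S : Set (Fin m → ℝ)) T) (hX : X.Nonempty)
    {ν w z : Fin m → ℝ} (hν : IsXCircuit X A b ν) (hz : z ∈ Pset X A b)
    (hνz : IsMaxOn (ν ⬝ᵥ ·) (Pset X A b) z) (hwz : IsMaxOn (w ⬝ᵥ ·) (Pset X A b) z)
    (hS : ∀ s ∈ S, IsMaxOn (ν ⬝ᵥ ·) (Pset X A b) s → IsMaxOn (w ⬝ᵥ ·) (Pset X A b) s)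
    (hT : ∀ d ∈ T, ν ⬝ᵥ d = 0 → w ⬝ᵥ d = 0) : ∃ t : ℝ, 0 ≤ t ∧ w = t • ν := by
  obtain ⟨hνN, hν0, -, hνext⟩ := hν
  rw [hP] at hz hνz hwz hS
  obtain ⟨ε, hmax, hε⟩ :=
    ((eventually_isMaxOn_add_smul_sub hz hνz hwz hS hT).and self_mem_nhdsWithin).exists
  rw [← hP] at hz hmax hwz
  have hN : ∀ u, IsMaxOn (u ⬝ᵥ ·) (Pset X A b) z → u ∈ Nbeta b := fun u hu =>
    mem_nbeta_of_suppFn_pset_lt_top hX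
      (by rw [suppFn_eq_of_isMaxOn hz hu]; exact EReal.coe_lt_top _)
  by_cases hprop : Proportional w ν
  · obtain ⟨c, rfl⟩ : ∃ c : ℝ, w = c • ν := by
      obtain ⟨t, h | h⟩ := hprop
      · exact ⟨t, h⟩
      · have ht : t ≠ 0 := by rintro rfl; exact hν0 (by simpa using h)
        exact ⟨t⁻¹, by rw [h, smul_smul, inv_mul_cancel₀ ht, one_smul]⟩
    exact ⟨c, not_lt.1 fun hc => hν0 (eq_zero_of_smul_mem_nbeta hνN hc (hN _ hwz)), rfl⟩
  · have hε : 0 < ε := hε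
    refine absurd ⟨w, ν + ε • (ν - w), ε / (1 + ε), hN w hwz, hN _ hmax, ?_,
      ⟨by positivity, (div_lt_one (by positivity)).2 (by linarith)⟩, ?_,
      sigmaAffineOnSeg_of_isMaxOn (hN w hwz) (hN _ hmax) hz hwz hmax⟩ hνext
    · rw [proportional_iff_not_linearIndependent, not_not]
      rw [proportional_iff_not_linearIndependent, not_not] at hprop
      exact linearIndependent_pair_add_smul_sub hprop hε
    · have : (1 + ε) ≠ 0 := by positivity
      funext i
      simp only [Pi.add_apply, Pi.smul_apply, Pi.sub_apply, smul_eq_mul]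
      field_simp
      ring

theorem normalCone_setOf_isMaxOn_eq_of_isXCircuit {S T : Finset (Fin m → ℝ)}
    (hP : Pset X A b = convAddCone (S : Set (Fin m → ℝ)) T) (hS : S.Nonempty) (hX : X.Nonempty)
    {ν : Fin m → ℝ} (hν : IsXCircuit X A b ν) :
    normalCone (Pset X A b) {z ∈ Pset X A b | IsMaxOn (ν ⬝ᵥ ·) (Pset X A b) z} =
      {w | ∃ t : ℝ, 0 ≤ t ∧ w = t • ν} := by
  ext w
  rw [mem_normalCone_iff fun z hz => hz.1]
  constructor
  · intro hw
    obtain ⟨z, hzS, hz⟩ := exists_isMaxOn_of_suppFn_lt_top hS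
      (by rw [← hP, suppFn_pset_of_mem_nbeta hν.1]; exact hν.2.2.1)
    rw [← hP] at hz
    have hzP : z ∈ Pset X A b := hP ▸ subset_convAddCone hzS
    show ∃ t : ℝ, 0 ≤ t ∧ w = t • ν
    refine eq_smul_of_isXCircuit hP hX hν hzP hz (hw z ⟨hzP, hz⟩)
      (fun s hs hsmax => hw s ⟨hP ▸ subset_convAddCone hs, hsmax⟩) fun d hd hd0 => ?_
    have hzd : z + d ∈ Pset X A b := by
      simpa [hP] using add_smul_mem_convAddCone (hP ▸ hzP) hd zero_le_one
    have h₁ : w ⬝ᵥ z ≤ w ⬝ᵥ (z + d) :=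
      hw (z + d) ⟨hzd, fun y hy => by simpa [dotProduct_add, hd0] using hz hy⟩ hzP
    have h₂ : w ⬝ᵥ (z + d) ≤ w ⬝ᵥ z := hw z ⟨hzP, hz⟩ hzd
    rw [dotProduct_add] at h₁ h₂
    linarith
  · rintro ⟨t, ht, rfl⟩ z ⟨-, hz⟩ y hy
    simpa [smul_dotProduct] using mul_le_mul_of_nonneg_left (hz hy) ht

theorem isXCircuit_of_normalCone_eq {F : Set (Fin m → ℝ)} {ν : Fin m → ℝ}
    (hF : F ⊆ Pset X A b) (hν : ν ∈ Nbeta b) (hν0 : ν ≠ 0)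
    (hN : normalCone (Pset X A b) F = {w | ∃ t : ℝ, 0 ≤ t ∧ w = t • ν}) :
    IsXCircuit X A b ν := by
  have hray : ∀ w ∈ normalCone (Pset X A b) F, ∃ t : ℝ, 0 ≤ t ∧ w = t • ν := fun w hw => by
    rwa [hN] at hw
  have hνN : ν ∈ normalCone (Pset X A b) F := hN ▸ ⟨1, zero_le_one, (one_smul ℝ ν).symm⟩
  have hF₀ : F.Nonempty := by
    rw [Set.nonempty_iff_ne_empty]
    rintro rfl
    obtain ⟨t, ht, h⟩ := hray (-ν) fun z hz => hz.elim
    have : (1 + t) • ν = 0 := by rw [add_smul, one_smul, ← h, add_neg_cancel]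
    exact hν0 ((smul_eq_zero.1 this).resolve_left (by positivity))
  refine ⟨hν, hν0, ?_, ?_⟩
  · obtain ⟨z, hz⟩ := hF₀
    rw [← suppFn_pset_of_mem_nbeta hν,
      suppFn_eq_of_isMaxOn (hF hz) ((mem_normalCone_iff hF).1 hνN z hz)]
    exact EReal.coe_lt_top _
  · rintro ⟨ν₁, ν₂, θ, h₁, h₂, hnp, ⟨hθ0, hθ1⟩, hdec, haff⟩
    have h := haff θ ⟨hθ0.le, hθ1.le⟩
    rw [← suppFn_pset_of_mem_nbeta (hdec ▸ hν), ← suppFn_pset_of_mem_nbeta h₁,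
      ← suppFn_pset_of_mem_nbeta h₂] at h
    obtain ⟨hν₁, hν₂⟩ := mem_normalCone_of_suppFn_eq_add hF hF₀ hθ0 hθ1 (hdec ▸ hνN) h
    obtain ⟨t₁, -, e₁⟩ := hray ν₁ hν₁
    obtain ⟨t₂, -, e₂⟩ := hray ν₂ hν₂
    refine hnp ?_
    by_cases ht₂ : t₂ = 0
    · exact ⟨0, Or.inr (by rw [e₂, ht₂, zero_smul, zero_smul])⟩
    · exact ⟨t₁ / t₂, Or.inl (by rw [e₁, e₂, smul_smul, div_mul_cancel₀ _ ht₂])⟩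

end Circuit

section Finiteness

variable {n m : ℕ} {X : Set (Fin n → ℝ)} {A : Fin m → Fin n → ℝ} {b : Fin m}

theorem finite_lambdaB {S T : Finset (Fin m → ℝ)}
    (hP : Pset X A b = convAddCone (S : Set (Fin m → ℝ)) T) (hS : S.Nonempty) (hX : X.Nonempty) :
    (LambdaB X A b).Finite := by
  let tight : (Fin m → ℝ) → Set (Fin m → ℝ) × Set (Fin m → ℝ) := fun l =>
    ({s ∈ (S : Set (Fin m → ℝ)) | IsMaxOn (l ⬝ᵥ ·) (Pset X A b) s},
      {d ∈ (T : Set (Fin m → ℝ)) | l ⬝ᵥ d = 0})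
  refine Set.Finite.of_finite_image (f := tight)
    ((S.finite_toSet.powerset.prod T.finite_toSet.powerset).subset ?_) ?_
  · rintro _ ⟨l, -, rfl⟩
    exact ⟨Set.sep_subset _ _, Set.sep_subset _ _⟩
  · rintro l ⟨hl, hlb⟩ l' ⟨-, hl'b⟩ heq
    obtain ⟨z, hzS, hz⟩ := exists_isMaxOn_of_suppFn_lt_top hS
      (by rw [← hP, suppFn_pset_of_mem_nbeta hl.1]; exact hl.2.2.1)
    rw [← hP] at hz
    have hS' : ∀ s ∈ S, IsMaxOn (l ⬝ᵥ ·) (Pset X A b) s → IsMaxOn (l' ⬝ᵥ ·) (Pset X A b) s :=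
      fun s hs hmax => by
        have h : s ∈ (tight l).1 := ⟨hs, hmax⟩
        rw [heq] at h
        exact h.2
    have hT' : ∀ d ∈ T, l ⬝ᵥ d = 0 → l' ⬝ᵥ d = 0 :=
      fun d hd h0 => by
        have h : d ∈ (tight l).2 := ⟨hd, h0⟩
        rw [heq] at h
        exact h.2
    obtain ⟨t, -, ht⟩ := eq_smul_of_isXCircuit hP hX hl (hP ▸ subset_convAddCone hzS) hz
      (hS' z hzS hz) hS' hT'
    have ht1 : t = 1 := by
      have := congrFun ht b
      simp only [Pi.smul_apply, smul_eq_mul, hlb, hl'b] at this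
      linarith
    rw [ht, ht1, one_smul]

end Finiteness

theorem statement2_general {n m : ℕ} (X : Set (Fin n → ℝ)) (hXne : X.Nonempty)
    (hpoly : IsPolyhedron X)
    (A : Fin m → Fin n → ℝ) :
    (∀ (b : Fin m) (ν : Fin m → ℝ), ν ∈ Nbeta b → ν ≠ 0 →
      (IsXCircuit X A b ν ↔
        ∃ F : Set (Fin m → ℝ), IsFaceOf (Pset X A b) F ∧
          {w : Fin m → ℝ | ∀ z ∈ F, ((dotp z w : ℝ) : EReal) = suppFn (Pset X A b) w}
            = {w : Fin m → ℝ | ∃ t : ℝ, 0 ≤ t ∧ w = t • ν})) ∧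
    (Lambda X A).Finite := by
  obtain ⟨S, T, hX⟩ := hpoly.exists_eq_convAddCone
  have hS : (S.image fun x => -(A *ᵥ x)).Nonempty := by
    obtain ⟨_, c, hc, -⟩ := hX ▸ hXne
    exact (Finset.coe_nonempty.1 (convexHull_nonempty_iff.1 ⟨c, hc⟩)).image _
  refine ⟨fun b ν hν hν0 => ⟨fun hcirc => ?_, fun ⟨F, hF, hN⟩ =>
    isXCircuit_of_normalCone_eq hF.1 hν hν0 hN⟩, Set.finite_iUnion fun b => ?_⟩
  · obtain ⟨T', hP⟩ := exists_pset_eq_convAddCone (A := A) hX b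
    exact ⟨_, isFaceOf_setOf_isMaxOn (hP ▸ convex_convAddCone) ν,
      normalCone_setOf_isMaxOn_eq_of_isXCircuit hP hS hXne hcirc⟩
  · obtain ⟨T', hP⟩ := exists_pset_eq_convAddCone (A := A) hX b
    exact finite_lambdaB hP hS hXne

theorem statement2 {n m : ℕ} (X : Set (Fin n → ℝ)) (hXne : X.Nonempty)
    (hpoly : IsPolyhedron X)
    (A : Fin m → Fin n → ℝ) (hA : Function.Injective A) (hm : 0 < m) :
    (∀ (b : Fin m) (ν : Fin m → ℝ), ν ∈ Nbeta b → ν ≠ 0 →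
      (IsXCircuit X A b ν ↔
        ∃ F : Set (Fin m → ℝ), IsFaceOf (Pset X A b) F ∧
          {w : Fin m → ℝ | ∀ z ∈ F, ((dotp z w : ℝ) : EReal) = suppFn (Pset X A b) w}
            = {w : Fin m → ℝ | ∃ t : ℝ, 0 ≤ t ∧ w = t • ν})) ∧
    (Lambda X A).Finite :=
  statement2_general X hXne hpoly A
end

section
/- Let β ∈ 𝒜 and let c ∈ C_X(𝒜,β) satisfy c_β < 0. Suppose ν ∈ N_β satisfies condition (★) for c, and ν = Σ_{i=1}^k θᵢ ν⁽ⁱ⁾ is a convex combination (k ≥ 2, θᵢ > 0, Σθᵢ = 1) of pairwise non-proportional vectors ν⁽¹⁾,…,ν⁽ᵏ⁾ ∈ N_β such that the map ν̃ ↦ σ_X(−𝒜ν̃) is affine on conv{ν⁽¹⁾,…,ν⁽ᵏ⁾}, i.e. σ_X(−𝒜(Σμᵢν⁽ⁱ⁾)) = Σμᵢ σ_X(−𝒜ν⁽ⁱ⁾) for all μᵢ ≥ 0 with Σμᵢ = 1. Then c is not an edge generator of the cone C_X(𝒜,β). -/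
open Finset

/-!
Affinity of `σ_X(-𝒜·)` along `ν = Σ θᵢ ν⁽ⁱ⁾` gives `σ_X(-𝒜ν) = Σ θᵢ σ_X(-𝒜ν⁽ⁱ⁾)`, so for each `i`
the budget of (★) can be shared between `ρ = θᵢ ν⁽ⁱ⁾` and `ρ' = ν - ρ`. Scaling `c_α` (`α ≠ β`)
by `ρ_α / ν_α`, resp. `ρ'_α / ν_α`, keeps the log-ratios `log (ν_α / (e c_α))`, so this splits
`c = u + w` with `ρ`, `ρ'` certifying (★) for `u`, `w`; and a certificate implies membership in
the AGE cone by the Fenchel–Young inequality `y s - y log (y / (e g)) ≤ g eˢ`. If `c` spanned an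
extreme ray, `u` would be a multiple of `c`, forcing `θᵢ ν⁽ⁱ⁾` to be a multiple of `ν` for
every `i`, so `ν⁽¹⁾` and `ν⁽²⁾` would be proportional.
-/

open Real

namespace EReal

theorem coe_finset_sum {ι : Type*} (s : Finset ι) (f : ι → ℝ) :
    ((∑ i ∈ s, f i : ℝ) : EReal) = ∑ i ∈ s, (f i : EReal) :=
  map_sum (⟨⟨Real.toEReal, coe_zero⟩, coe_add⟩ : ℝ →+ EReal) f s

theorem sum_ne_bot {ι : Type*} {s : Finset ι} {f : ι → EReal} (h : ∀ i ∈ s, f i ≠ ⊥) :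
    ∑ i ∈ s, f i ≠ ⊥ := by
  classical
  induction s using Finset.induction_on with
  | empty => simp
  | insert a s ha ih =>
    rw [sum_insert ha, add_ne_bot_iff]
    exact ⟨h a (mem_insert_self a s), ih fun i hi => h i (mem_insert_of_mem hi)⟩

theorem sum_ne_top_iff {ι : Type*} {s : Finset ι} {f : ι → EReal} (h : ∀ i ∈ s, f i ≠ ⊥) :
    ∑ i ∈ s, f i ≠ ⊤ ↔ ∀ i ∈ s, f i ≠ ⊤ := by
  classical
  induction s using Finset.induction_on with
  | empty => simp
  | insert a s ha ih =>
    have hs : ∀ i ∈ s, f i ≠ ⊥ := fun i hi => h i (mem_insert_of_mem hi)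
    rw [sum_insert ha, add_ne_top_iff_ne_top₂ (h a (mem_insert_self a s)) (sum_ne_bot hs),
      ih hs, forall_mem_insert]

theorem ne_top_of_sum_coe_mul_ne_top {ι : Type*} {s : Finset ι} {t : ι → ℝ} {f : ι → EReal}
    (ht : ∀ i ∈ s, 0 < t i) (hf : ∀ i ∈ s, f i ≠ ⊥) (h : ∑ i ∈ s, (t i : EReal) * f i ≠ ⊤) :
    ∀ i ∈ s, f i ≠ ⊤ := by
  intro i hi htop
  have hbot : ∀ j ∈ s, (t j : EReal) * f j ≠ ⊥ := fun j hj => (mul_ne_bot _ _).mpr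
    ⟨Or.inl (coe_ne_bot _), Or.inr (hf j hj), Or.inl (coe_ne_top _),
      Or.inl (EReal.coe_nonneg.mpr (ht j hj).le)⟩
  have := (sum_ne_top_iff hbot).mp h i hi
  rw [htop, coe_mul_top_of_pos (ht i hi)] at this
  exact this rfl

end EReal

theorem relEnt_ne_bot (a c : ℝ) : relEnt a c ≠ ⊥ := by
  unfold relEnt
  split_ifs
  · exact EReal.zero_ne_bot
  · exact EReal.coe_ne_bot _
  · exact top_ne_bot

theorem relEnt_eq_coe_of_ne_top {a c : ℝ} (h : relEnt a c ≠ ⊤) :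
    relEnt a c = ((a * log (a / c) : ℝ) : EReal) ∧ (a ≠ 0 → 0 < c) := by
  unfold relEnt at h ⊢
  by_cases ha : a = 0
  · simp [ha]
  · by_cases hc : 0 < c
    · simp [ha, hc]
    · simp [ha, hc] at h

theorem relEntSum_eq_coe_of_ne_top {m : ℕ} {b : Fin m} {ν c : Fin m → ℝ}
    (h : relEntSum b ν c ≠ ⊤) :
    relEntSum b ν c = ((∑ i ∈ univ.erase b, ν i * log (ν i / (exp 1 * c i)) : ℝ) : EReal) ∧
      ∀ i, i ≠ b → ν i ≠ 0 → 0 < c i := by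
  have hterm := (EReal.sum_ne_top_iff fun i _ => relEnt_ne_bot _ _).mp h
  refine ⟨?_, fun i hi hνi => ?_⟩
  · rw [EReal.coe_finset_sum]
    exact sum_congr rfl fun i hi => (relEnt_eq_coe_of_ne_top (hterm i hi)).1
  · have := (relEnt_eq_coe_of_ne_top (hterm i (mem_erase.mpr ⟨hi, mem_univ i⟩))).2 hνi
    exact pos_of_mul_pos_right this (exp_pos 1).le

section Nbeta

variable {m : ℕ} {b : Fin m}

theorem add_mem_Nbeta {ρ ρ' : Fin m → ℝ} (hρ : ρ ∈ Nbeta b) (hρ' : ρ' ∈ Nbeta b) :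
    ρ + ρ' ∈ Nbeta b :=
  ⟨fun i hi => add_nonneg (hρ.1 i hi) (hρ'.1 i hi), by simp [sum_add_distrib, hρ.2, hρ'.2]⟩

theorem sum_smul_mem_Nbeta {ι : Type*} (s : Finset ι) {t : ι → ℝ} {v : ι → Fin m → ℝ}
    (ht : ∀ j ∈ s, 0 ≤ t j) (hv : ∀ j ∈ s, v j ∈ Nbeta b) : ∑ j ∈ s, t j • v j ∈ Nbeta b := by
  refine ⟨fun i hi => ?_, ?_⟩ <;> simp only [Finset.sum_apply, Pi.smul_apply, smul_eq_mul]
  · exact sum_nonneg fun j hj => mul_nonneg (ht j hj) ((hv j hj).1 i hi)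
  rw [sum_comm]
  exact sum_eq_zero fun j hj => by rw [← mul_sum, (hv j hj).2, mul_zero]

theorem apply_eq_neg_sum_erase_of_mem_Nbeta {ν : Fin m → ℝ} (hν : ν ∈ Nbeta b) :
    ν b = -∑ i ∈ univ.erase b, ν i := by
  linarith [add_sum_erase univ ν (mem_univ b), hν.2]

theorem eq_smul_of_mem_Nbeta {ρ ν : Fin m → ℝ} {a : ℝ} (hρ : ρ ∈ Nbeta b) (hν : ν ∈ Nbeta b)
    (h : ∀ i, i ≠ b → ρ i = a * ν i) : ρ = a • ν := by
  funext i
  rcases eq_or_ne i b with rfl | hi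
  · rw [Pi.smul_apply, smul_eq_mul, apply_eq_neg_sum_erase_of_mem_Nbeta hρ,
      apply_eq_neg_sum_erase_of_mem_Nbeta hν, mul_neg, mul_sum]
    exact congrArg _ (sum_congr rfl fun j hj => h j (ne_of_mem_erase hj))
  · exact h i hi

end Nbeta

section SupportFunction

variable {n m : ℕ} {X : Set (Fin n → ℝ)} (A : Fin m → Fin n → ℝ)

theorem dotp_Amap (ν : Fin m → ℝ) (x : Fin n → ℝ) :
    dotp (Amap A ν) x = ∑ i, ν i * dotp (A i) x := by
  simp only [dotp, Amap, sum_mul, mul_sum]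
  rw [sum_comm]
  exact sum_congr rfl fun i _ => sum_congr rfl fun j _ => by ring

theorem dotp_Amap_sum_smul {ι : Type*} (s : Finset ι) (t : ι → ℝ) (v : ι → Fin m → ℝ)
    (x : Fin n → ℝ) :
    dotp (Amap A (∑ j ∈ s, t j • v j)) x = ∑ j ∈ s, t j * dotp (Amap A (v j)) x := by
  simp only [dotp_Amap, Finset.sum_apply, Pi.smul_apply, smul_eq_mul, sum_mul, mul_sum]
  rw [sum_comm]
  exact sum_congr rfl fun i _ => sum_congr rfl fun j _ => by ring

theorem neg_dotp_Amap_le_sigA (ν : Fin m → ℝ) {x : Fin n → ℝ} (hx : x ∈ X) :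
    ((-dotp (Amap A ν) x : ℝ) : EReal) ≤ sigA X A ν := by
  refine le_iSup₂_of_le (f := fun x (_ : x ∈ X) => ((dotp (-Amap A ν) x : ℝ) : EReal)) x hx ?_
  simp [dotp, sum_neg_distrib]

theorem sigA_ne_bot (hX : X.Nonempty) (ν : Fin m → ℝ) : sigA X A ν ≠ ⊥ := by
  obtain ⟨x, hx⟩ := hX
  exact ne_bot_of_le_ne_bot (EReal.coe_ne_bot _) (neg_dotp_Amap_le_sigA A ν hx)

end SupportFunction

theorem mul_sub_mul_log_le_mul_exp {r g : ℝ} (s : ℝ) (hr : 0 ≤ r) (hg : 0 ≤ g)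
    (hrg : 0 < r → 0 < g) : r * s - r * log (r / (exp 1 * g)) ≤ g * exp s := by
  rcases hr.eq_or_lt with rfl | hr
  · simpa using mul_nonneg hg (exp_pos s).le
  have hg := hrg hr
  have hlog : log (r / (exp 1 * g)) = -log (g * exp s / r) + s - 1 := by
    rw [log_div hr.ne' (by positivity), log_mul (exp_ne_zero 1) hg.ne', log_exp,
      log_div (by positivity) hr.ne', log_mul hg.ne' (exp_ne_zero s), log_exp]
    ring
  have h := mul_le_mul_of_nonneg_left
    (log_le_sub_one_of_pos (by positivity : 0 < g * exp s / r)) hr.le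
  rw [mul_sub, mul_one, mul_div_cancel₀ _ hr.ne'] at h
  rw [hlog]
  linarith

theorem mul_log_div_mul_div (r c v : ℝ) :
    r * log (r / (exp 1 * (c * r / v))) = r * log (v / (exp 1 * c)) := by
  rcases eq_or_ne r 0 with rfl | hr
  · simp
  rw [← mul_div_assoc, ← mul_assoc, div_div_eq_mul_div, mul_comm r v, mul_div_mul_right _ _ hr]

section AgeCone

variable {n m : ℕ} {X : Set (Fin n → ℝ)} {A : Fin m → Fin n → ℝ} {b : Fin m}

theorem mem_ageCone_of_entropy_le {g ρ : Fin m → ℝ} {B : ℝ}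
    (hg : ∀ i, i ≠ b → 0 ≤ g i) (hρ : ρ ∈ Nbeta b) (hgρ : ∀ i, i ≠ b → 0 < ρ i → 0 < g i)
    (hB : ∀ x ∈ X, -dotp (Amap A ρ) x ≤ B)
    (hgb : B + ∑ i ∈ univ.erase b, ρ i * log (ρ i / (exp 1 * g i)) ≤ g b) :
    g ∈ AgeCone X A b := by
  refine ⟨hg, fun x hx => ?_⟩
  set d : Fin m → ℝ := fun i => dotp (A i) x
  have hρd : dotp (Amap A ρ) x = ∑ i ∈ univ.erase b, ρ i * (d i - d b) := by
    rw [dotp_Amap, ← add_sum_erase _ _ (mem_univ b), apply_eq_neg_sum_erase_of_mem_Nbeta hρ]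
    simp only [mul_sub, sum_sub_distrib, ← sum_mul]
    ring
  have hFY : ∑ i ∈ univ.erase b, (ρ i * (d i - d b) - ρ i * log (ρ i / (exp 1 * g i)))
      ≤ ∑ i ∈ univ.erase b, g i * exp (d i - d b) :=
    sum_le_sum fun i hi => mul_sub_mul_log_le_mul_exp _ (hρ.1 i (ne_of_mem_erase hi))
      (hg i (ne_of_mem_erase hi)) (hgρ i (ne_of_mem_erase hi))
  have hexp : ∑ i, g i * exp (d i)
      = exp (d b) * (g b + ∑ i ∈ univ.erase b, g i * exp (d i - d b)) := by
    rw [← add_sum_erase _ _ (mem_univ b), mul_add, mul_sum, mul_comm]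
    refine congrArg _ (sum_congr rfl fun i _ => ?_)
    rw [exp_sub]
    field_simp
  rw [sum_sub_distrib, ← hρd] at hFY
  show 0 ≤ ∑ i, g i * exp (d i)
  rw [hexp]
  exact mul_nonneg (exp_pos _).le (by linarith [hB x hx])

theorem mem_ageCone_of_rescale {c ν ρ g : Fin m → ℝ} {B : ℝ}
    (hcν : ∀ i, i ≠ b → ν i ≠ 0 → 0 < c i) (hρ : ρ ∈ Nbeta b) (hρν : ∀ i, i ≠ b → ρ i ≤ ν i)
    (hg : ∀ i, i ≠ b → 0 ≤ g i) (hgρ : ∀ i, i ≠ b → ρ i ≠ 0 → g i = c i * ρ i / ν i)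
    (hB : ∀ x ∈ X, -dotp (Amap A ρ) x ≤ B)
    (hgb : B + ∑ i ∈ univ.erase b, ρ i * log (ν i / (exp 1 * c i)) ≤ g b) :
    g ∈ AgeCone X A b := by
  refine mem_ageCone_of_entropy_le hg hρ (fun i hi hpos => ?_) hB (le_of_eq_of_le ?_ hgb)
  · have hν := hpos.trans_le (hρν i hi)
    rw [hgρ i hi hpos.ne']
    exact div_pos (mul_pos (hcν i hi hν.ne') hpos) hν
  · refine congrArg _ (sum_congr rfl fun i hi => ?_)
    rcases eq_or_ne (ρ i) 0 with h0 | h0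
    · simp [h0]
    · rw [hgρ i (ne_of_mem_erase hi) h0, mul_log_div_mul_div]

theorem exists_ageCone_split {c ν ρ ρ' : Fin m → ℝ} {B B' : ℝ}
    (hc : ∀ i, i ≠ b → 0 ≤ c i) (hcν : ∀ i, i ≠ b → ν i ≠ 0 → 0 < c i)
    (hρ : ρ ∈ Nbeta b) (hρ' : ρ' ∈ Nbeta b) (hν : ν = ρ + ρ')
    (hB : ∀ x ∈ X, -dotp (Amap A ρ) x ≤ B) (hB' : ∀ x ∈ X, -dotp (Amap A ρ') x ≤ B')
    (hcb : B + B' + ∑ i ∈ univ.erase b, ν i * log (ν i / (exp 1 * c i)) ≤ c b) :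
    ∃ u w, u ∈ AgeCone X A b ∧ w ∈ AgeCone X A b ∧ c = u + w ∧
      ∀ a : ℝ, u = a • c → ρ = a • ν := by
  set L : Fin m → ℝ := fun i => log (ν i / (exp 1 * c i))
  have hνi : ∀ i, ν i = ρ i + ρ' i := fun i => by rw [hν, Pi.add_apply]
  have hρν : ∀ i, i ≠ b → ρ i ≤ ν i := fun i hi => by linarith [hνi i, hρ'.1 i hi]
  have hρ'ν : ∀ i, i ≠ b → ρ' i ≤ ν i := fun i hi => by linarith [hνi i, hρ.1 i hi]
  -- `u_β` is the least value for which `ρ` certifies `u`; the whole slack of (★) goes to `w`.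
  set u : Fin m → ℝ :=
    Function.update (fun i => c i * ρ i / ν i) b (B + ∑ i ∈ univ.erase b, ρ i * L i)
  have hu : ∀ i, i ≠ b → u i = c i * ρ i / ν i := fun i hi => Function.update_of_ne hi _ _
  have hw : ∀ i, i ≠ b → ν i ≠ 0 → (c - u) i = c i * ρ' i / ν i := fun i hi h0 => by
    rw [Pi.sub_apply, hu i hi, eq_div_iff h0, sub_mul, div_mul_cancel₀ _ h0, hνi]
    ring
  refine ⟨u, c - u, ?_, ?_, (add_sub_cancel u c).symm, fun a hua => ?_⟩
  · refine mem_ageCone_of_rescale hcν hρ hρν (fun i hi => ?_) (fun i hi _ => hu i hi) hB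
      (by simp [u, L])
    rw [hu i hi]
    exact div_nonneg (mul_nonneg (hc i hi) (hρ.1 i hi)) ((hρ.1 i hi).trans (hρν i hi))
  · refine mem_ageCone_of_rescale hcν hρ' hρ'ν (fun i hi => ?_) (fun i hi h0 => hw i hi ?_) hB' ?_
    · rcases eq_or_ne (ν i) 0 with h0 | h0
      · simpa [hu i hi, h0] using hc i hi
      · rw [hw i hi h0]
        exact div_nonneg (mul_nonneg (hc i hi) (hρ'.1 i hi)) ((hρ'.1 i hi).trans (hρ'ν i hi))
    · exact ((lt_of_le_of_ne (hρ'.1 i hi) h0.symm).trans_le (hρ'ν i hi)).ne'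
    · have hL : ∑ i ∈ univ.erase b, ν i * L i
          = ∑ i ∈ univ.erase b, ρ i * L i + ∑ i ∈ univ.erase b, ρ' i * L i := by
        rw [← sum_add_distrib]
        exact sum_congr rfl fun i _ => by rw [hνi]; ring
      simp only [Pi.sub_apply, u, Function.update_self]
      linarith
  · refine eq_smul_of_mem_Nbeta hρ (hν ▸ add_mem_Nbeta hρ hρ') fun i hi => ?_
    have hi' : c i * ρ i / ν i = a * c i := by rw [← hu i hi, hua, Pi.smul_apply, smul_eq_mul]
    rcases eq_or_ne (ν i) 0 with h0 | h0
    · rw [h0, mul_zero]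
      exact le_antisymm (h0 ▸ hρν i hi) (hρ.1 i hi)
    · rw [div_eq_iff h0] at hi'
      exact mul_left_cancel₀ (hcν i hi h0).ne' (by linarith)

end AgeCone

theorem exists_ageCone_split_of_affine {n m : ℕ} {X : Set (Fin n → ℝ)} (hX : X.Nonempty)
    {A : Fin m → Fin n → ℝ} {b : Fin m} {c ν : Fin m → ℝ} (hc : c ∈ AgeCone X A b)
    (hstar : StarCond X A b c ν) {k : ℕ} {θ : Fin k → ℝ} {νs : Fin k → Fin m → ℝ}
    (hθpos : ∀ i, 0 < θ i) (hmem : ∀ i, νs i ∈ Nbeta b) (hcomb : ν = ∑ i, θ i • νs i)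
    (haff : sigA X A ν = ∑ i, (θ i : EReal) * sigA X A (νs i)) (s : Finset (Fin k)) :
    ∃ u w, u ∈ AgeCone X A b ∧ w ∈ AgeCone X A b ∧ c = u + w ∧
      ∀ a : ℝ, u = a • c → ∑ i ∈ s, θ i • νs i = a • ν := by
  obtain ⟨-, -, hle⟩ := hstar
  obtain ⟨hS, hD⟩ := (EReal.add_ne_top_iff_ne_top₂ (sigA_ne_bot A hX ν)
    (EReal.sum_ne_bot fun i _ => relEnt_ne_bot _ _)).mp
    (ne_top_of_le_ne_top (EReal.coe_ne_top _) hle)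
  obtain ⟨hDeq, hcν⟩ := relEntSum_eq_coe_of_ne_top hD
  have hσ_ne_top := EReal.ne_top_of_sum_coe_mul_ne_top (fun j _ => hθpos j)
    (fun j _ => sigA_ne_bot A hX (νs j)) (haff ▸ hS)
  set σ : Fin k → ℝ := fun j => (sigA X A (νs j)).toReal
  have hσ : ∀ j, sigA X A (νs j) = σ j :=
    fun j => (EReal.coe_toReal (hσ_ne_top j (mem_univ j)) (sigA_ne_bot A hX _)).symm
  have hbound : ∀ t : Finset (Fin k), ∀ x ∈ X,
      -dotp (Amap A (∑ j ∈ t, θ j • νs j)) x ≤ ∑ j ∈ t, θ j * σ j := fun t x hx => by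
    rw [dotp_Amap_sum_smul, ← sum_neg_distrib]
    refine sum_le_sum fun j _ => ?_
    have hj := neg_dotp_Amap_le_sigA A (νs j) hx
    rw [hσ, EReal.coe_le_coe_iff] at hj
    rw [← mul_neg]
    exact mul_le_mul_of_nonneg_left hj (hθpos j).le
  rw [haff, hDeq] at hle
  simp only [hσ, ← EReal.coe_mul, ← EReal.coe_finset_sum, ← EReal.coe_add,
    EReal.coe_le_coe_iff] at hle
  refine exists_ageCone_split hc.1 hcν (sum_smul_mem_Nbeta s (fun j _ => (hθpos j).le)
    fun j _ => hmem j) (sum_smul_mem_Nbeta sᶜ (fun j _ => (hθpos j).le) fun j _ => hmem j)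
    (by rw [hcomb, sum_add_sum_compl]) (hbound s) (hbound sᶜ) ?_
  rwa [sum_add_sum_compl]

theorem proportional_of_smul_eq_smul {m : ℕ} {u v w : Fin m → ℝ} {s t a a' : ℝ}
    (hs : s ≠ 0) (ht : t ≠ 0) (hu : s • u = a • w) (hv : t • v = a' • w) : Proportional u v := by
  replace hu : u = (s⁻¹ * a) • w := by rw [mul_smul, ← hu, inv_smul_smul₀ hs]
  replace hv : v = (t⁻¹ * a') • w := by rw [mul_smul, ← hv, inv_smul_smul₀ ht]
  rcases eq_or_ne (s⁻¹ * a) 0 with h0 | h0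
  · exact ⟨0, Or.inl (by rw [hu, h0, zero_smul, zero_smul])⟩
  · refine ⟨t⁻¹ * a' / (s⁻¹ * a), Or.inr ?_⟩
    rw [hu, hv, smul_smul, div_mul_cancel₀ _ h0]

theorem statement3_general {n m : ℕ} (X : Set (Fin n → ℝ)) (hXne : X.Nonempty)
    (A : Fin m → Fin n → ℝ)
    (b : Fin m) (c ν : Fin m → ℝ)
    (hc : c ∈ AgeCone X A b)
    (hstar : StarCond X A b c ν)
    (k : ℕ) (hk : 2 ≤ k) (θ : Fin k → ℝ) (νs : Fin k → Fin m → ℝ)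
    (hθpos : ∀ i, 0 < θ i) (hθsum : ∑ i, θ i = 1)
    (hmem : ∀ i, νs i ∈ Nbeta b)
    (hnp : ∀ i j, i ≠ j → ¬ Proportional (νs i) (νs j))
    (hcomb : ν = ∑ i, θ i • νs i)
    (haff : ∀ μ : Fin k → ℝ, (∀ i, 0 ≤ μ i) → ∑ i, μ i = 1 →
      sigA X A (∑ i, μ i • νs i) = ∑ i, ((μ i : ℝ) : EReal) * sigA X A (νs i)) :
    ¬ IsEdgeGenerator (AgeCone X A b) c := by
  intro hedge
  have hθ : sigA X A ν = ∑ i, (θ i : EReal) * sigA X A (νs i) :=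
    hcomb ▸ haff θ (fun i => (hθpos i).le) hθsum
  have hmul : ∀ i, ∃ a : ℝ, θ i • νs i = a • ν := fun i => by
    obtain ⟨u, w, hu, hw, huw, hprop⟩ :=
      exists_ageCone_split_of_affine hXne hc hstar hθpos hmem hcomb hθ {i}
    obtain ⟨⟨a, -, ha⟩, -⟩ := hedge.2.2 u hu w hw huw
    exact ⟨a, by simpa using hprop a ha⟩
  obtain ⟨a₀, h₀⟩ := hmul ⟨0, by omega⟩
  obtain ⟨a₁, h₁⟩ := hmul ⟨1, by omega⟩
  exact hnp _ _ (by simp [Fin.ext_iff])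
    (proportional_of_smul_eq_smul (hθpos _).ne' (hθpos _).ne' h₀ h₁)

theorem statement3 {n m : ℕ} (X : Set (Fin n → ℝ)) (hXne : X.Nonempty) (hXcl : IsClosed X)
    (hXcv : Convex ℝ X) (A : Fin m → Fin n → ℝ) (hA : Function.Injective A) (hm : 0 < m)
    (b : Fin m) (c ν : Fin m → ℝ)
    (hc : c ∈ AgeCone X A b) (hcb : c b < 0)
    (hstar : StarCond X A b c ν)
    (k : ℕ) (hk : 2 ≤ k) (θ : Fin k → ℝ) (νs : Fin k → Fin m → ℝ)
    (hθpos : ∀ i, 0 < θ i) (hθsum : ∑ i, θ i = 1)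
    (hmem : ∀ i, νs i ∈ Nbeta b)
    (hnp : ∀ i j, i ≠ j → ¬ Proportional (νs i) (νs j))
    (hcomb : ν = ∑ i, θ i • νs i)
    (haff : ∀ μ : Fin k → ℝ, (∀ i, 0 ≤ μ i) → ∑ i, μ i = 1 →
      sigA X A (∑ i, μ i • νs i) = ∑ i, ((μ i : ℝ) : EReal) * sigA X A (νs i)) :
    ¬ IsEdgeGenerator (AgeCone X A b) c :=
  statement3_general X hXne A b c ν hc hstar k hk θ νs hθpos hθsum hmem hnp hcomb haff
end

section
/- Let λ ∈ N_β with λ_β = −1 and σ_X(−𝒜λ) < ∞, and write β = λ⁻ and supp λ = {α : λ_α ≠ 0}. Define the linear map S_λ : ℝ^𝒜 → ℝ^{supp λ} by (S_λ w)_α = w_α for α ∈ λ⁺ and (S_λ w)_β = w_β · exp(σ_X(−𝒜λ)), and let δ_β ∈ ℝ^{supp λ} be the standard basis vector at β. Then C_X(𝒜,λ) = {c ∈ ℝ^𝒜 : c_α ≥ 0 for all α ≠ β, and there exists r ≥ 0 with S_λ c − r δ_β ∈ Pow(λ)*}, where Pow(λ)* = {w ∈ ℝ^{supp λ} : w_α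 ≥ 0 for α ∈ λ⁺, and ∏_{α∈λ⁺} (w_α/λ_α)^{λ_α} ≥ |w_β|} is the dual λ-weighted power cone. -/
open Finset

/-- The linear map `S_λ : ℝ^𝒜 → ℝ^{supp λ}`. -/
noncomputable def Slam {n m : ℕ} (X : Set (Fin n → ℝ)) (A : Fin m → Fin n → ℝ)
    (b : Fin m) (l : Fin m → ℝ) (w : Fin m → ℝ) : {i : Fin m // l i ≠ 0} → ℝ :=
  fun j => if j.1 = b then w b * Real.exp ((sigA X A l).toReal) else w j.1

/-- The standard basis vector `δ_β ∈ ℝ^{supp λ}`. -/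
noncomputable def deltaB {m : ℕ} (l : Fin m → ℝ) (b : Fin m) :
    {i : Fin m // l i ≠ 0} → ℝ :=
  fun j => if j.1 = b then 1 else 0

/-- The dual `λ`-weighted power cone `Pow(λ)* ⊆ ℝ^{supp λ}`. -/
noncomputable def PowDual {m : ℕ} (l : Fin m → ℝ) (b : Fin m) (hb : l b ≠ 0) :
    Set ({i : Fin m // l i ≠ 0} → ℝ) :=
  {w | (∀ j, 0 < l j.1 → 0 ≤ w j) ∧
    |w ⟨b, hb⟩| ≤ ∏ j ∈ Finset.univ.filter (fun j : {i : Fin m // l i ≠ 0} => 0 < l j.1),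
      (w j / l j.1) ^ (l j.1)}

open Classical in
lemma prod_eq_aux {m : ℕ} (l : Fin m → ℝ) (b : Fin m) (hlb : l b = -1)
    (w : {i : Fin m // l i ≠ 0} → ℝ) (c : Fin m → ℝ)
    (hw : ∀ j : {i : Fin m // l i ≠ 0}, j.1 ≠ b → w j = c j.1) :
    ∏ j ∈ Finset.univ.filter (fun j : {i : Fin m // l i ≠ 0} => 0 < l j.1),
        (w j / l j.1) ^ (l j.1)
      = ∏ i ∈ Finset.univ.filter (fun i => 0 < l i), (c i / l i) ^ (l i) := by
  refine Finset.prod_bij (fun j _ => j.1) ?_ ?_ ?_ ?_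
  · intro j hj
    simp only [Finset.mem_filter, Finset.mem_univ, true_and] at hj ⊢
    exact hj
  · intro j₁ h₁ j₂ h₂ h
    exact Subtype.ext h
  · intro i hi
    simp only [Finset.mem_filter, Finset.mem_univ, true_and] at hi
    exact ⟨⟨i, ne_of_gt hi⟩, by simp [hi], rfl⟩
  · intro j hj
    simp only [Finset.mem_filter, Finset.mem_univ, true_and] at hj
    have hjb : j.1 ≠ b := fun h => by rw [h, hlb] at hj; linarith
    rw [hw j hjb]

theorem statement6 {n m : ℕ} (X : Set (Fin n → ℝ)) (hXne : X.Nonempty) (hXcl : IsClosed X)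
    (hXcv : Convex ℝ X) (A : Fin m → Fin n → ℝ) (hA : Function.Injective A) (hm : 0 < m)
    (b : Fin m) (l : Fin m → ℝ) (hl : l ∈ Nbeta b) (hlb : l b = -1) (hb0 : l b ≠ 0)
    (hfin : sigA X A l < ⊤) :
    WitnessCone X A b l =
      {c | (∀ i, i ≠ b → 0 ≤ c i) ∧
        ∃ r : ℝ, 0 ≤ r ∧
          (fun j => Slam X A b l c j - r * deltaB l b j) ∈ PowDual l b hb0} := by
  have hexp : 0 < Real.exp ((sigA X A l).toReal) := Real.exp_pos _
  set σ := Real.exp ((sigA X A l).toReal) with hσ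
  ext c
  set P := ∏ i ∈ Finset.univ.filter (fun i => 0 < l i), (c i / l i) ^ (l i) with hP
  have hbne : ∀ i : Fin m, 0 < l i → i ≠ b := by
    intro i hi h; rw [h, hlb] at hi; linarith
  constructor
  · rintro ⟨hpos, hineq⟩
    rw [neg_mul] at hineq
    have hPnn : 0 ≤ P := by
      apply Finset.prod_nonneg
      intro i hi
      simp only [Finset.mem_filter, Finset.mem_univ, true_and] at hi
      exact Real.rpow_nonneg (div_nonneg (hpos i (hbne i hi)) hi.le) _
    refine ⟨hpos, max 0 (c b * σ - P), le_max_left _ _, ?_, ?_⟩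
    · intro j hj
      have hjb : j.1 ≠ b := hbne j.1 hj
      simp only [Slam, deltaB, hjb, if_neg hjb, if_true, if_false, mul_zero, sub_zero]
      exact hpos j.1 hjb
    · rw [prod_eq_aux l b hlb _ c (by
        intro j hjb
        simp only [Slam, deltaB, if_neg hjb, mul_zero, sub_zero])]
      simp only [Slam, deltaB, if_pos rfl, if_true, if_false, mul_one]
      rw [abs_le, ← hσ]
      constructor
      · have h1 : -P ≤ c b * σ := by
          have := hineq
          nlinarith
        rcases le_total (c b * σ - P) 0 with h | h
        · rw [max_eq_left h]; simpa using h1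
        · rw [max_eq_right h]; linarith
      · have : c b * σ - P ≤ max 0 (c b * σ - P) := le_max_right _ _
        linarith
  · rintro ⟨hpos, r, hr, hw1, hw2⟩
    refine ⟨hpos, ?_⟩
    rw [prod_eq_aux l b hlb _ c (by
        intro j hjb
        simp only [Slam, deltaB, if_neg hjb, mul_zero, sub_zero])] at hw2
    simp only [Slam, deltaB, if_pos rfl, if_true, if_false, mul_one, abs_le] at hw2
    rw [neg_mul, ← hσ, ← hP]
    rw [← hσ, ← hP] at hw2
    have h1 := hw2.1
    linarith
end

section
/- Let λ ∈ N_β with λ_β = −1 and σ_X(−𝒜λ) < ∞, and write β = λ⁻. The dual cone of the λ-witnessed AGE cone (viewed as a cone of coefficient vectors in ℝ^𝒜) is C_X(𝒜,λ)* = {v ∈ ℝ^𝒜 : v_α ≥ 0 for all α ∈ 𝒜, and exp(σ_X(−𝒜λ)) · ∏_{α∈λ⁺} v_α^{λ_α} ≥ v_β}. -/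
open Finset

theorem statement7 {n m : ℕ} (X : Set (Fin n → ℝ)) (hXne : X.Nonempty) (hXcl : IsClosed X)
    (hXcv : Convex ℝ X) (A : Fin m → Fin n → ℝ) (hA : Function.Injective A) (hm : 0 < m)
    (b : Fin m) (l : Fin m → ℝ) (hl : l ∈ Nbeta b) (hlb : l b = -1)
    (hfin : sigA X A l < ⊤) :
    dualConeV (WitnessCone X A b l) =
      {v | (∀ i, 0 ≤ v i) ∧
        v b ≤ Real.exp ((sigA X A l).toReal) *
          ∏ i ∈ Finset.univ.filter (fun i => 0 < l i), (v i) ^ (l i)} := by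
  classical
  ext v
  simp only [dualConeV, WitnessCone, Set.mem_setOf_eq]
  set σ : ℝ := (sigA X A l).toReal with hσdef
  set E : ℝ := Real.exp σ with hEdef
  have hE : (0:ℝ) < E := Real.exp_pos σ
  set S : Finset (Fin m) := Finset.univ.filter (fun i => 0 < l i) with hSdef
  have hlb' : l b = -1 := hlb
  have hSsub : S ⊆ Finset.univ.erase b := by
    intro i hi
    refine Finset.mem_erase.mpr ⟨?_, Finset.mem_univ i⟩
    intro h; subst h
    have := (Finset.mem_filter.mp hi).2
    rw [hlb'] at this; linarith
  have hsum1 : ∑ i ∈ S, l i = 1 := by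
    have h0 : ∑ i, l i = 0 := hl.2
    have h1 : ∑ i ∈ S, l i = ∑ i ∈ Finset.univ.erase b, l i := by
      refine Finset.sum_subset hSsub ?_
      intro i hi hiS
      have hib : i ≠ b := (Finset.mem_erase.mp hi).1
      have h1 := hl.1 i hib
      have h2 : ¬ 0 < l i := fun h =>
        hiS (Finset.mem_filter.mpr ⟨Finset.mem_univ i, h⟩)
      linarith
    have h2 := Finset.add_sum_erase Finset.univ l (Finset.mem_univ b)
    rw [h0, hlb'] at h2
    rw [h1]; linarith
  constructor
  · -- dual cone membership implies the explicit description
    intro hv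
    have hnn : ∀ i, 0 ≤ v i := by
      intro i
      have hmem : (∀ j, j ≠ b → 0 ≤ (Pi.single i 1 : Fin m → ℝ) j) ∧
          (-((Pi.single i 1 : Fin m → ℝ) b)) * E ≤
            ∏ j ∈ S, (((Pi.single i 1 : Fin m → ℝ)) j / l j) ^ (l j) := by
        constructor
        · intro j hj
          rcases eq_or_ne j i with h|h <;> simp [Pi.single_apply, h]
        · have hb0 : 0 ≤ (Pi.single i 1 : Fin m → ℝ) b := by
            rcases eq_or_ne b i with h|h <;> simp [Pi.single_apply, h]
          have h1 : -((Pi.single i 1 : Fin m → ℝ) b) * E ≤ 0 :=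
            mul_nonpos_of_nonpos_of_nonneg (neg_nonpos.mpr hb0) hE.le
          refine h1.trans (Finset.prod_nonneg fun j hj => Real.rpow_nonneg ?_ _)
          have hlj : 0 < l j := (Finset.mem_filter.mp hj).2
          have hjnn : 0 ≤ (Pi.single i 1 : Fin m → ℝ) j := by
            rcases eq_or_ne j i with h|h <;> simp [Pi.single_apply, h]
          exact div_nonneg hjnn hlj.le
      have h0 := hv ((Pi.single i 1 : Fin m → ℝ)) hmem
      have hsum : ∑ j, v j * ((Pi.single i 1 : Fin m → ℝ)) j = v i := by
        rw [Finset.sum_eq_single_of_mem i (Finset.mem_univ i)]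
        · simp
        · intro j _ hji
          simp [Pi.single_apply, hji]
      rw [hsum] at h0
      exact h0
    have key : ∀ ε : ℝ, 0 < ε → v b ≤ E * ∏ i ∈ S, (v i + ε) ^ (l i) := by
      intro ε hε
      set P : ℝ := ∏ i ∈ S, (v i + ε) ^ (l i) with hPdef
      have hP : 0 < P := Finset.prod_pos fun i _ =>
        Real.rpow_pos_of_pos (by have := hnn i; linarith) _
      set c : Fin m → ℝ := fun j =>
        if j = b then -(P⁻¹ * E⁻¹) else if 0 < l j then l j / (v j + ε) else 0 with hcdef
      have hcb : c b = -(P⁻¹ * E⁻¹) := by simp [hcdef]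
      have hcmem : (∀ j, j ≠ b → 0 ≤ c j) ∧
          (-(c b)) * E ≤ ∏ j ∈ S, (c j / l j) ^ (l j) := by
        constructor
        · intro j hj
          simp only [hcdef, if_neg hj]
          split
          · next h =>
            exact div_nonneg h.le (by have := hnn j; linarith)
          · exact le_refl 0
        · have hprod : ∏ j ∈ S, (c j / l j) ^ (l j) = P⁻¹ := by
            rw [hPdef, ← Finset.prod_inv_distrib]
            refine Finset.prod_congr rfl fun j hj => ?_
            have hjb : j ≠ b := (Finset.mem_erase.mp (hSsub hj)).1
            have hlj : 0 < l j := (Finset.mem_filter.mp hj).2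
            have hvε : 0 < v j + ε := by have := hnn j; linarith
            have hcj : c j = l j / (v j + ε) := by simp [hcdef, hjb, hlj]
            rw [hcj, ← Real.inv_rpow hvε.le]
            congr 1
            field_simp
          rw [hcb, hprod, neg_neg, mul_assoc, inv_mul_cancel₀ hE.ne', mul_one]
      have h0 := hv c hcmem
      have hsplit : ∑ i, v i * c i = v b * c b + ∑ i ∈ Finset.univ.erase b, v i * c i :=
        (Finset.add_sum_erase _ _ (Finset.mem_univ b)).symm
      have hz : ∀ j ∈ Finset.univ.erase b, j ∉ S → v j * c j = 0 := by
        intro j hj hjS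
        have hjb : j ≠ b := (Finset.mem_erase.mp hj).1
        have hnl : ¬ 0 < l j := fun h => hjS (Finset.mem_filter.mpr ⟨Finset.mem_univ j, h⟩)
        simp [hcdef, hjb, hnl]
      have herase : ∑ i ∈ Finset.univ.erase b, v i * c i = ∑ i ∈ S, v i * c i :=
        (Finset.sum_subset hSsub hz).symm
      have hSsum : ∑ i ∈ S, v i * c i ≤ 1 := by
        calc ∑ i ∈ S, v i * c i ≤ ∑ i ∈ S, l i := by
              refine Finset.sum_le_sum fun j hj => ?_
              have hjb : j ≠ b := (Finset.mem_erase.mp (hSsub hj)).1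
              have hlj : 0 < l j := (Finset.mem_filter.mp hj).2
              have hvε : 0 < v j + ε := by have := hnn j; linarith
              have hcj : c j = l j / (v j + ε) := by simp [hcdef, hjb, hlj]
              rw [hcj]
              have hrw : v j * (l j / (v j + ε)) = l j * (v j / (v j + ε)) := by ring
              rw [hrw]
              have h1 : v j / (v j + ε) ≤ 1 := by
                rw [div_le_one hvε]; linarith
              nlinarith [hlj.le, div_nonneg (hnn j) hvε.le]
          _ = 1 := hsum1
      have hineq : v b * (P⁻¹ * E⁻¹) ≤ 1 := by
        rw [hsplit, herase, hcb] at h0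
        have h2 : v b * -(P⁻¹ * E⁻¹) = -(v b * (P⁻¹ * E⁻¹)) := by ring
        rw [h2] at h0
        linarith
      have hEP : (0:ℝ) < E * P := mul_pos hE hP
      have hrw2 : v b * (P⁻¹ * E⁻¹) = v b / (E * P) := by
        rw [div_eq_mul_inv, mul_inv]; ring
      rw [hrw2, div_le_one hEP] at hineq
      exact hineq
    refine ⟨hnn, ?_⟩
    have hlim : Filter.Tendsto (fun ε : ℝ => E * ∏ i ∈ S, (v i + ε) ^ (l i))
        (nhdsWithin 0 (Set.Ioi 0)) (nhds (E * ∏ i ∈ S, (v i) ^ (l i))) := by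
      have h1 : Filter.Tendsto (fun ε : ℝ => ∏ i ∈ S, (v i + ε) ^ (l i))
          (nhds 0) (nhds (∏ i ∈ S, (v i) ^ (l i))) := by
        apply tendsto_finset_prod
        intro i hi
        have hadd : Filter.Tendsto (fun ε : ℝ => v i + ε) (nhds 0) (nhds (v i)) := by
          have := (tendsto_const_nhds.add (Filter.tendsto_id (α := ℝ)) :
            Filter.Tendsto (fun ε : ℝ => v i + ε) (nhds 0) (nhds (v i + 0)))
          simpa using this
        have hli : 0 < l i := (Finset.mem_filter.mp hi).2
        exact ((Real.continuousAt_rpow_const (v i) (l i) (Or.inr hli.le)).tendsto).comp hadd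
      exact (h1.const_mul E).mono_left nhdsWithin_le_nhds
    refine ge_of_tendsto hlim ?_
    filter_upwards [self_mem_nhdsWithin] with ε hε
    exact key ε hε
  · -- explicit description implies dual cone membership
    rintro ⟨hnn, hvb⟩ c ⟨hc1, hc2⟩
    by_cases hcb : 0 ≤ c b
    · refine Finset.sum_nonneg fun i _ => ?_
      rcases eq_or_ne i b with h|h
      · subst h; exact mul_nonneg (hnn i) hcb
      · exact mul_nonneg (hnn i) (hc1 i h)
    push_neg at hcb
    have hamgm : ∏ j ∈ S, (v j * c j / l j) ^ (l j) ≤ ∑ j ∈ S, v j * c j := by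
      have h := Real.geom_mean_le_arith_mean_weighted S l (fun j => v j * c j / l j)
        (fun j hj => ((Finset.mem_filter.mp hj).2).le) hsum1
        (fun j hj => div_nonneg
          (mul_nonneg (hnn j) (hc1 j ((Finset.mem_erase.mp (hSsub hj)).1)))
          ((Finset.mem_filter.mp hj).2).le)
      refine h.trans_eq (Finset.sum_congr rfl fun j hj => ?_)
      have hlj : (l j) ≠ 0 := ne_of_gt (Finset.mem_filter.mp hj).2
      rw [mul_comm, div_mul_cancel₀ _ hlj]
    have hfactor : ∏ j ∈ S, (v j * c j / l j) ^ (l j) =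
        (∏ j ∈ S, (v j) ^ (l j)) * ∏ j ∈ S, (c j / l j) ^ (l j) := by
      rw [← Finset.prod_mul_distrib]
      refine Finset.prod_congr rfl fun j hj => ?_
      have hjb : j ≠ b := (Finset.mem_erase.mp (hSsub hj)).1
      have hlj : 0 < l j := (Finset.mem_filter.mp hj).2
      rw [mul_div_assoc, Real.mul_rpow (hnn j) (div_nonneg (hc1 j hjb) hlj.le)]
    have hPv : 0 ≤ ∏ j ∈ S, (v j) ^ (l j) :=
      Finset.prod_nonneg fun j _ => Real.rpow_nonneg (hnn j) _
    have hncb : 0 < -(c b) := by linarith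
    have h2 : (∏ j ∈ S, (v j) ^ (l j)) * ((-(c b)) * E) ≤ ∑ j ∈ S, v j * c j := by
      calc (∏ j ∈ S, (v j) ^ (l j)) * ((-(c b)) * E)
          ≤ (∏ j ∈ S, (v j) ^ (l j)) * (∏ j ∈ S, (c j / l j) ^ (l j)) :=
            mul_le_mul_of_nonneg_left hc2 hPv
        _ = ∏ j ∈ S, (v j * c j / l j) ^ (l j) := hfactor.symm
        _ ≤ ∑ j ∈ S, v j * c j := hamgm
    have h3 : v b * (-(c b)) ≤ (∏ j ∈ S, (v j) ^ (l j)) * ((-(c b)) * E) := by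
      calc v b * (-(c b)) ≤ (E * ∏ j ∈ S, (v j) ^ (l j)) * (-(c b)) :=
            mul_le_mul_of_nonneg_right hvb hncb.le
        _ = (∏ j ∈ S, (v j) ^ (l j)) * ((-(c b)) * E) := by ring
    have h4 : ∑ j ∈ S, v j * c j ≤ ∑ j ∈ Finset.univ.erase b, v j * c j :=
      Finset.sum_le_sum_of_subset_of_nonneg hSsub fun j hj hjS =>
        mul_nonneg (hnn j) (hc1 j (Finset.mem_erase.mp hj).1)
    have hsplit : ∑ i, v i * c i = v b * c b + ∑ i ∈ Finset.univ.erase b, v i * c i :=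
      (Finset.add_sum_erase _ _ (Finset.mem_univ b)).symm
    rw [hsplit]
    have h5 : v b * (-(c b)) ≤ ∑ i ∈ Finset.univ.erase b, v i * c i :=
      le_trans (h3.trans h2) h4
    rw [mul_neg] at h5
    linarith
end
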